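/- arXiv:2605.16868 — 2 statements merged into one kernel-verified Lean document; each statement's English description precedes it below -/
import Mathlib

section
/- Let T > 0, X ∈ D_T(L1), and let F be a reflection kernel with bounded parameters (γ, k). Let Y ∈ D_T^↑(L1) be feasible, i.e., Z_u(t) := X_u(t) + Y_u(t) − ∫₀¹ F(u,v) Y_v(t) dv ≥ 0 for all u ∈ [0,1] and t ∈ [0,T]. Then Y is the unique fixed point of π_{X,F} in D_T^↑(L1) if and only if the following complementarity property holds: for every u ∈ [0,1], the Lebesgue–Stieltjes measure on [0,T] induced by the nondecreasing right-continuous function t ↦ Y_u(t), with the convention Y_u(0−) = 0 (so the measure has an atom of mass Y_u(0) at 0), assigns measure zero to the set {t ∈ [0,T] : Z_u(t) > 0}. -/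
open MeasureTheory Set Filter
open scoped ENNReal NNReal

noncomputable section

/-- Operator norm of a kernel: `‖F‖_op = sup_{v ∈ [0,1]} ∫₀¹ |F(u,v)| du`. -/
def kernelOpNorm (F : ℝ → ℝ → ℝ) : ℝ≥0∞ :=
  ⨆ v ∈ Icc (0:ℝ) 1, ∫⁻ u in Icc (0:ℝ) 1, ENNReal.ofReal |F u v|

/-- Composition of kernels. -/
def kernelComp (F G : ℝ → ℝ → ℝ) : ℝ → ℝ → ℝ :=
  fun u v => ∫ w in Icc (0:ℝ) 1, F u w * G w v

/-- `kernelIter F (n-1)` is the `n`-fold composition `F^(n)`; so `kernelIter F 0 = F^(1) = F`. -/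
def kernelIter (F : ℝ → ℝ → ℝ) : ℕ → ℝ → ℝ → ℝ
  | 0 => F
  | n + 1 => kernelComp F (kernelIter F n)

/-- Spatial action of a kernel on `f : [0,1] × [0,T] → ℝ`. -/
def kernelApply (F f : ℝ → ℝ → ℝ) : ℝ → ℝ → ℝ :=
  fun u t => ∫ v in Icc (0:ℝ) 1, F u v * f v t

/-- `sup_{0 ≤ t ≤ T} |f_u(t)|`, valued in `ℝ≥0∞`. -/
def pathSup (T : ℝ) (f : ℝ → ℝ → ℝ) (u : ℝ) : ℝ≥0∞ :=
  ⨆ t ∈ Icc (0:ℝ) T, ENNReal.ofReal |f u t|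

/-- `‖f‖_{T,1} = ∫₀¹ sup_{0 ≤ t ≤ T} |f_u(t)| du`, valued in `ℝ≥0∞`. -/
def TNorm (T : ℝ) (f : ℝ → ℝ → ℝ) : ℝ≥0∞ :=
  ∫⁻ u in Icc (0:ℝ) 1, pathSup T f u

/-- `f ∈ D_T(L1)`. -/
structure MemDT (T : ℝ) (f : ℝ → ℝ → ℝ) : Prop where
  rightCont : ∀ u ∈ Icc (0:ℝ) 1, ∀ t ∈ Ico (0:ℝ) T, ContinuousWithinAt (f u) (Ici t) t
  leftLim : ∀ u ∈ Icc (0:ℝ) 1, ∀ t ∈ Ioc (0:ℝ) T,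
    ∃ L : ℝ, Tendsto (f u) (nhdsWithin t (Iio t)) (nhds L)
  meas : ∀ t ∈ Icc (0:ℝ) T, Measurable fun u => f u t
  finite : TNorm T f ≠ ⊤

/-- `f ∈ D_T^↑(L1)`. -/
structure MemDTup (T : ℝ) (f : ℝ → ℝ → ℝ) : Prop where
  memDT : MemDT T f
  nonneg_zero : ∀ u ∈ Icc (0:ℝ) 1, 0 ≤ f u 0
  mono : ∀ u ∈ Icc (0:ℝ) 1, MonotoneOn (f u) (Icc (0:ℝ) T)

/-- `F` is a reflection kernel with bounded parameters `(γ, k)`. -/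
structure IsReflKernel (F : ℝ → ℝ → ℝ) (γ : ℝ) (k : ℕ) : Prop where
  meas : Measurable (Function.uncurry F)
  nonneg : ∀ u ∈ Icc (0:ℝ) 1, ∀ v ∈ Icc (0:ℝ) 1, 0 ≤ F u v
  opNorm_le_one : kernelOpNorm F ≤ 1
  gamma_mem : γ ∈ Set.Ioo (0:ℝ) 1
  k_pos : 1 ≤ k
  iter_le : kernelOpNorm (kernelIter F (k - 1)) ≤ ENNReal.ofReal γ

/-- The map `π_{X,F}`: `π_{X,F}(W)_u(t) = sup_{0 ≤ s ≤ t} max(−X_u(s) + (F W)_u(s), 0)`. -/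
def piMap (X F W : ℝ → ℝ → ℝ) : ℝ → ℝ → ℝ :=
  fun u t => ⨆ s : Icc (0:ℝ) t, max (-(X u s.1) + kernelApply F W u s.1) 0

end

noncomputable section

/-- Extension of `g : [0,T] → ℝ` to `ℝ`, equal to `0` on `(-∞,0)` and constant `g T` on `[T,∞)`
(so the induced Stieltjes measure has an atom of mass `g 0` at `0`). -/
def lsExtend (T : ℝ) (g : ℝ → ℝ) : ℝ → ℝ :=
  fun t => if t < 0 then 0 else g (min t T)

/-- Complementarity: for every `u ∈ [0,1]`, the Lebesgue–Stieltjes measure induced by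
`t ↦ Y_u(t)` assigns measure zero to `{t ∈ [0,T] : Z_u(t) > 0}`. -/
def Complementary (T : ℝ) (Y Z : ℝ → ℝ → ℝ) : Prop :=
  ∀ u ∈ Icc (0:ℝ) 1, ∀ S : StieltjesFunction ℝ,
    (∀ t : ℝ, S t = lsExtend T (Y u) t) →
    S.measure {t : ℝ | t ∈ Icc (0:ℝ) T ∧ 0 < Z u t} = 0

/-- `(Y, Z)` solves the infinite-dimensional Skorokhod problem for `(X, F)`. -/
def SolvesSkorokhod (T : ℝ) (X F Y Z : ℝ → ℝ → ℝ) : Prop :=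
  MemDTup T Y ∧ MemDT T Z ∧
  (∀ u ∈ Icc (0:ℝ) 1, ∀ t ∈ Icc (0:ℝ) T,
    Z u t = X u t + Y u t - kernelApply F Y u t) ∧
  (∀ u ∈ Icc (0:ℝ) 1, ∀ t ∈ Icc (0:ℝ) T, 0 ≤ Z u t) ∧
  (∀ u ∈ Icc (0:ℝ) 1, Y u 0 = 0) ∧
  Complementary T Y Z

end

/-!
Since `-X + F Y = Y - Z`, the fixed-point equation `Y = π_{X,F}(Y)` says that on each path
`Y_u(t) = sup_{s ≤ t} (Y_u(s) - Z_u(s))⁺`, i.e. `Y_u` is the one-dimensional Skorokhod regulator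
of `Z_u - Y_u`. Such a regulator charges only `{Z_u = 0}`: at a time where `Z_u > 0` it cannot
jump, and since `Z_u = X_u + Y_u - (F Y)_u` is lower semicontinuous from the right it stays flat
for a while afterwards; a covering argument for such half-open intervals gives the null set.
Conversely, if `dY_u` does not charge `{Z_u > 0}`, then up to a null set `[0, t]` lies in
`{Y_u ≤ a}` with `a = sup_{s ≤ t} (Y_u(s) - Z_u(s))⁺`, whose `dY_u`-mass is at most `a`.

Uniqueness holds for any kernel with bounded parameters: the sup over time `G` of the difference
of two fixed points satisfies `G ≤ F G` pointwise, hence `G ≤ F^(k) G`, and integrating over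
`[0, 1]` gives `∫ G ≤ γ ∫ G`, so `G = 0` almost everywhere.
-/

open Function Topology

theorem measure_eq_zero_of_forall_Ico {α : Type*} [LinearOrder α] [TopologicalSpace α]
    [OrderTopology α] [SecondCountableTopology α] [MeasurableSpace α] {μ : Measure α}
    {E : Set α} (h : ∀ t ∈ E, ∃ t' > t, μ (Ico t t') = 0) : μ E = 0 := by
  choose! g hg hnull using h
  set U := ⋃ t : E, Ioo (t : α) (g t) with hUdef
  have hU : μ U = 0 := by
    obtain ⟨s, hs, hsU⟩ := TopologicalSpace.isOpen_iUnion_countable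
      (fun t : E => Ioo (t : α) (g t)) fun _ => isOpen_Ioo
    rw [hUdef, ← hsU]
    exact (measure_biUnion_null_iff hs).2 fun t _ =>
      measure_mono_null Ioo_subset_Ico_self (hnull t t.2)
  -- the points of `E` not covered by `U` have pairwise disjoint intervals `(t, g t)`
  have hcount : (E \ U).Countable := by
    refine Set.PairwiseDisjoint.countable_of_Ioo (y := g) ?_ fun t ht => hg t ht.1
    intro a ha b hb hab
    wlog hlt : a < b generalizing a b
    · exact (this hb ha hab.symm (lt_of_le_of_ne (not_lt.1 hlt) hab.symm)).symm
    have hgb : g a ≤ b := by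
      by_contra! hb'
      exact hb.2 (mem_iUnion.2 ⟨⟨a, ha.1⟩, hlt, hb'⟩)
    exact disjoint_left.2 fun x hxa hxb => (hxa.2.trans_le hgb).not_ge hxb.1.le
  have hrest : μ (E \ U) = 0 := by
    rw [← biUnion_of_singleton (E \ U)]
    exact (measure_biUnion_null_iff hcount).2 fun t ht =>
      measure_mono_null (singleton_subset_iff.2 (left_mem_Ico.2 (hg t ht.1))) (hnull t ht.1)
  rwa [measure_sdiff_null' (measure_mono_null inter_subset_right hU)] at hrest

theorem StieltjesFunction.measure_Iic_inter_setOf_le (f : StieltjesFunction ℝ) {l : ℝ}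
    (hf : Tendsto f atBot (𝓝 l)) (a b : ℝ) :
    f.measure (Iic b ∩ {x | f x ≤ a}) ≤ ENNReal.ofReal (a - l) := by
  set J := Iic b ∩ {x | f x ≤ a}
  rcases J.eq_empty_or_nonempty with hJ | hJ
  · simp [hJ]
  have hbdd : BddAbove J := ⟨b, fun x hx => hx.1⟩
  by_cases hm : sSup J ∈ J
  · calc f.measure J ≤ f.measure (Iic (sSup J)) := measure_mono fun x hx => le_csSup hbdd hx
      _ = ENNReal.ofReal (f (sSup J) - l) := f.measure_Iic hf _
      _ ≤ _ := ENNReal.ofReal_le_ofReal (by linarith [show f (sSup J) ≤ a from hm.2])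
  · have hJm : J ⊆ Iio (sSup J) := fun x hx =>
      lt_of_le_of_ne (le_csSup hbdd hx) fun h => hm (h ▸ hx)
    have hlim : leftLim f (sSup J) ≤ a := by
      refine le_of_tendsto (f.mono.tendsto_leftLim _) ?_
      filter_upwards [self_mem_nhdsWithin] with x hx
      obtain ⟨c, hc, hxc⟩ := exists_lt_of_lt_csSup hJ hx
      exact (f.mono hxc.le).trans hc.2
    calc f.measure J ≤ f.measure (Iio (sSup J)) := measure_mono hJm
      _ = ENNReal.ofReal (leftLim f (sSup J) - l) := f.measure_Iio hf _
      _ ≤ _ := ENNReal.ofReal_le_ofReal (by linarith)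

theorem ofReal_abs_iSup_sub_iSup_le {ι : Type*} [Nonempty ι] (a b : ι → ℝ) :
    ENNReal.ofReal |(⨆ i, a i) - ⨆ i, b i| ≤ ⨆ i, ENNReal.ofReal |a i - b i| := by
  set R := ⨆ i, ENNReal.ofReal |a i - b i|
  rcases eq_top_or_lt_top R with hR | hR
  · simp [hR]
  have hab : ∀ i, |a i - b i| ≤ R.toReal := fun i =>
    (ENNReal.ofReal_le_iff_le_toReal hR.ne).1 (le_iSup (fun i => ENNReal.ofReal |a i - b i|) i)
  have shift : ∀ a b : ι → ℝ, (∀ i, a i ≤ b i + R.toReal) → BddAbove (range b) →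
      BddAbove (range a) ∧ ⨆ i, a i ≤ (⨆ i, b i) + R.toReal := fun a b h hb =>
    have hle : ∀ i, a i ≤ (⨆ i, b i) + R.toReal := fun i =>
      (h i).trans (by gcongr; exact le_ciSup hb i)
    ⟨⟨_, forall_mem_range.2 hle⟩, ciSup_le hle⟩
  have hle : ∀ i, a i ≤ b i + R.toReal := fun i => by linarith [(abs_le.1 (hab i)).2]
  have hge : ∀ i, b i ≤ a i + R.toReal := fun i => by linarith [(abs_le.1 (hab i)).1]
  by_cases hb : BddAbove (range b)
  · obtain ⟨ha, h1⟩ := shift a b hle hb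
    have h2 := (shift b a hge ha).2
    exact ENNReal.ofReal_le_of_le_toReal (abs_sub_le_iff.2 ⟨by linarith, by linarith⟩)
  · have ha : ¬ BddAbove (range a) := fun ha => hb (shift b a hge ha).1
    simp [Real.iSup_of_not_bddAbove ha, Real.iSup_of_not_bddAbove hb]

theorem ofReal_abs_integral_sub_le {α : Type*} [MeasurableSpace α] {μ : Measure α}
    {f g : α → ℝ} (hf : AEStronglyMeasurable f μ) (hg : AEStronglyMeasurable g μ) :
    ENNReal.ofReal |∫ x, f x ∂μ - ∫ x, g x ∂μ| ≤ ∫⁻ x, ENNReal.ofReal |f x - g x| ∂μ := by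
  by_cases hfg : Integrable (fun x => f x - g x) μ
  · by_cases hfi : Integrable f μ
    · have hgi : Integrable g μ := (hfi.sub hfg).congr (.of_forall fun x => by simp)
      rw [← integral_sub hfi hgi, ← Real.enorm_eq_ofReal_abs]
      simpa [Real.enorm_eq_ofReal_abs] using
        enorm_integral_le_lintegral_enorm (fun x => f x - g x) (μ := μ)
    · have hgi : ¬ Integrable g μ := fun hgi =>
        hfi ((hfg.add hgi).congr (.of_forall fun x => by simp))
      simp [integral_undef hfi, integral_undef hgi]
  · have htop : ∫⁻ x, ENNReal.ofReal |f x - g x| ∂μ = ⊤ := by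
      contrapose! hfg
      refine ⟨hf.sub hg, (hasFiniteIntegral_iff_norm _).2 ?_⟩
      simpa [Real.norm_eq_abs] using hfg.lt_top
    simp [htop]

/-- Not continuity: `∫ f s` takes the junk value `0` once `f s` stops being integrable. -/
theorem upperSemicontinuousWithinAt_integral {α : Type*} [MeasurableSpace α] {μ : Measure α}
    {f : ℝ → α → ℝ} {t b : ℝ} (hmeas : ∀ s ∈ Icc t b, AEStronglyMeasurable (f s) μ)
    (hnn : ∀ᵐ a ∂μ, 0 ≤ f t a) (hmono : ∀ᵐ a ∂μ, MonotoneOn (fun s => f s a) (Icc t b))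
    (hcont : ∀ᵐ a ∂μ, ContinuousWithinAt (fun s => f s a) (Ici t) t) :
    UpperSemicontinuousWithinAt (fun s => ∫ a, f s a ∂μ) (Icc t b) t := by
  by_cases hint : ∃ s₀ ∈ Ioc t b, Integrable (f s₀) μ
  · obtain ⟨s₀, hs₀, hi⟩ := hint
    have hev : ∀ᶠ s in 𝓝[Icc t b] t, s ∈ Icc t s₀ := by
      filter_upwards [nhdsWithin_le_nhds (Iic_mem_nhds hs₀.1), self_mem_nhdsWithin] with s h1 h2
      exact ⟨h2.1, h1⟩
    refine ContinuousWithinAt.upperSemicontinuousWithinAt ?_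
    refine tendsto_integral_filter_of_dominated_convergence (f s₀) ?_ ?_ hi ?_
    · filter_upwards [hev] with s hs using hmeas s ⟨hs.1, hs.2.trans hs₀.2⟩
    · filter_upwards [hev] with s hs
      filter_upwards [hnn, hmono] with a ha hma
      have hs' : s ∈ Icc t b := ⟨hs.1, hs.2.trans hs₀.2⟩
      have hfs : 0 ≤ f s a := ha.trans (hma (left_mem_Icc.2 (hs.1.trans hs'.2)) hs' hs.1)
      rw [Real.norm_eq_abs, abs_of_nonneg hfs]
      exact hma hs' ⟨hs₀.1.le, hs₀.2⟩ hs.2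
    · filter_upwards [hcont] with a ha using ha.mono Icc_subset_Ici_self
  · push Not at hint
    have hle : ∀ s ∈ Icc t b, ∫ a, f s a ∂μ ≤ ∫ a, f t a ∂μ := fun s hs => by
      rcases hs.1.eq_or_lt with rfl | hts
      · exact le_rfl
      · rw [integral_undef (hint s ⟨hts, hs.2⟩)]
        exact integral_nonneg_of_ae hnn
    exact fun c hc => Filter.mem_of_superset self_mem_nhdsWithin fun s hs => (hle s hs).trans_lt hc

def timeGrid (T : ℝ) : Set ℝ := Icc 0 T ∩ insert T (range ((↑) : ℚ → ℝ))

theorem timeGrid_countable (T : ℝ) : (timeGrid T).Countable :=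
  ((countable_range _).insert T).mono inter_subset_right

theorem le_biSup_timeGrid {α : Type*} [CompleteLinearOrder α] [TopologicalSpace α]
    [ClosedIicTopology α] {T t : ℝ} {g : ℝ → α}
    (hg : ∀ s ∈ Ico 0 T, ContinuousWithinAt g (Ici s) s) (ht : t ∈ Icc 0 T) :
    g t ≤ ⨆ s ∈ timeGrid T, g s := by
  rcases ht.2.lt_or_eq with htT | rfl
  · set A := Ioo t T ∩ range ((↑) : ℚ → ℝ)
    have hA : t ∈ closure A := by
      have h := closure_minimal ((Rat.denseRange_cast (𝕜 := ℝ)).open_subset_closure_inter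
        (isOpen_Ioo (a := t) (b := T))) isClosed_closure
      exact h (by rw [closure_Ioo htT.ne]; exact left_mem_Icc.2 htT.le)
    have himage : g '' A ⊆ Iic (⨆ s ∈ timeGrid T, g s) := by
      rintro _ ⟨s, hs, rfl⟩
      exact le_biSup g ⟨⟨ht.1.trans hs.1.1.le, hs.1.2.le⟩, Or.inr hs.2⟩
    exact isClosed_Iic.closure_subset_iff.2 himage
      (((hg t ⟨ht.1, htT⟩).mono fun s hs => hs.1.1.le).mem_closure_image hA)
  · exact le_biSup g ⟨right_mem_Icc.2 ht.1, mem_insert _ _⟩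

section Regulator

variable {T t : ℝ} {y z : ℝ → ℝ}

theorem lsExtend_of_mem_Icc (ht : t ∈ Icc 0 T) : lsExtend T y t = y t := by
  rw [lsExtend, if_neg (not_lt.2 ht.1), min_eq_left ht.2]

theorem lsExtend_of_neg (ht : t < 0) : lsExtend T y t = 0 := if_pos ht

theorem lsExtend_of_le (hT : 0 ≤ T) (ht : T ≤ t) : lsExtend T y t = y T := by
  rw [lsExtend, if_neg (not_lt.2 (hT.trans ht)), min_eq_right ht]

theorem tendsto_lsExtend_atBot : Tendsto (lsExtend T y) atBot (𝓝 0) :=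
  tendsto_const_nhds.congr' <|
    (eventually_lt_atBot 0).mono fun _ ht => (lsExtend_of_neg ht).symm

theorem exists_stieltjesFunction_lsExtend (hT : 0 ≤ T) (hmono : MonotoneOn y (Icc 0 T))
    (h0 : 0 ≤ y 0) (hrc : ∀ t ∈ Ico 0 T, ContinuousWithinAt y (Ici t) t) :
    ∃ S : StieltjesFunction ℝ, ∀ t, S t = lsExtend T y t := by
  have hproj : ∀ {t}, 0 ≤ t → min t T ∈ Icc 0 T := fun ht => ⟨le_min ht hT, min_le_right _ _⟩
  refine ⟨⟨lsExtend T y, fun s t hst => ?_, fun x => ?_⟩, fun _ => rfl⟩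
  · simp only [lsExtend]
    split_ifs with hs ht ht
    · exact le_rfl
    · exact h0.trans (hmono ⟨le_rfl, hT⟩ (hproj (not_lt.1 ht)) (le_min (not_lt.1 ht) hT))
    · exact absurd (hst.trans_lt ht) hs
    · exact hmono (hproj (not_lt.1 hs)) (hproj (not_lt.1 ht)) (min_le_min_right T hst)
  rcases lt_or_ge x 0 with hx | hx
  · refine continuousWithinAt_const.congr_of_eventuallyEq ?_ (lsExtend_of_neg hx)
    filter_upwards [nhdsWithin_le_nhds (Iio_mem_nhds hx)] with t ht using lsExtend_of_neg ht
  rcases lt_or_ge x T with hxT | hxT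
  · refine (hrc x ⟨hx, hxT⟩).congr_of_eventuallyEq ?_ (lsExtend_of_mem_Icc ⟨hx, hxT.le⟩)
    filter_upwards [nhdsWithin_le_nhds (Iio_mem_nhds hxT), self_mem_nhdsWithin] with t ht ht'
      using lsExtend_of_mem_Icc ⟨hx.trans ht', le_of_lt ht⟩
  · refine continuousWithinAt_const.congr_of_eventuallyEq ?_ (lsExtend_of_le hT hxT)
    filter_upwards [self_mem_nhdsWithin] with t ht using lsExtend_of_le hT (hxT.trans ht)

/-- `y` is the one-dimensional Skorokhod regulator on `[0, T]` of the input `z - y`. -/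
def IsSkorokhodRegulator (T : ℝ) (y z : ℝ → ℝ) : Prop :=
  ∀ t ∈ Icc (0:ℝ) T, y t = ⨆ s : Icc (0:ℝ) t, max (y s - z s) 0

namespace IsSkorokhodRegulator

theorem nonneg (h : IsSkorokhodRegulator T y z) (ht : t ∈ Icc 0 T) : 0 ≤ y t :=
  h t ht ▸ Real.iSup_nonneg fun _ => le_max_right _ _

theorem le_of_forall_le (h : IsSkorokhodRegulator T y z) (ht : t ∈ Icc 0 T) {c : ℝ}
    (hc : ∀ s ∈ Icc 0 t, max (y s - z s) 0 ≤ c) : y t ≤ c := by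
  have : Nonempty (Icc (0:ℝ) t) := ⟨⟨0, left_mem_Icc.2 ht.1⟩⟩
  rw [h t ht]
  exact ciSup_le fun s => hc s s.2

variable {S : StieltjesFunction ℝ}

theorem le_leftLim (h : IsSkorokhodRegulator T y z) (hz : ∀ t ∈ Icc 0 T, 0 ≤ z t)
    (hS : ∀ t, S t = lsExtend T y t) (ht : t ∈ Icc 0 T) (hzt : 0 < z t) :
    y t ≤ leftLim S t := by
  have hlim0 : 0 ≤ leftLim S t := by
    simpa [hS, lsExtend_of_neg] using S.mono.le_leftLim (show (-1:ℝ) < t by linarith [ht.1])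
  have key : y t ≤ max (leftLim S t) (y t - z t) := h.le_of_forall_le ht fun s hs => by
    rcases hs.2.lt_or_eq with hst | rfl
    · have hs' : s ∈ Icc 0 T := ⟨hs.1, hst.le.trans ht.2⟩
      refine le_max_of_le_left (max_le ?_ hlim0)
      calc y s - z s ≤ y s := sub_le_self _ (hz s hs')
        _ = S s := (hS s).trans (lsExtend_of_mem_Icc hs') |>.symm
        _ ≤ leftLim S t := S.mono.le_leftLim hst
    · rw [max_comm (leftLim S s)]
      exact max_le_max le_rfl hlim0
  rcases le_max_iff.1 key with h' | h'
  · exact h'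
  · linarith

theorem exists_flat (h : IsSkorokhodRegulator T y z) (hmono : MonotoneOn y (Icc 0 T))
    (hz : ∀ t ∈ Icc 0 T, 0 ≤ z t) (hS : ∀ t, S t = lsExtend T y t) (ht : t ∈ Icc 0 T)
    (hzt : 0 < z t) (hlsc : t < T → LowerSemicontinuousWithinAt z (Icc t T) t) :
    ∃ t' > t, ∀ r ∈ Ico t t', S r ≤ S t := by
  rcases ht.2.lt_or_eq with htT | rfl
  · obtain ⟨u, hu, hsub⟩ := mem_nhdsGE_iff_exists_Ico_subset.1 <|
      nhdsWithin_Icc_eq_nhdsGE htT ▸ hlsc htT (z t / 2) (by linarith)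
    refine ⟨min u T, lt_min hu htT, fun r hr => ?_⟩
    have hr' : r ∈ Icc 0 T := ⟨ht.1.trans hr.1, hr.2.le.trans (min_le_right _ _)⟩
    rw [hS, hS, lsExtend_of_mem_Icc hr', lsExtend_of_mem_Icc ht]
    have key : y r ≤ max (y t) (y r - z t / 2) := h.le_of_forall_le hr' fun s hs => by
      have hs' : s ∈ Icc 0 T := ⟨hs.1, hs.2.trans hr'.2⟩
      rcases le_or_gt s t with hst | hst
      · exact le_max_of_le_left (max_le ((sub_le_self _ (hz s hs')).trans (hmono hs' ht hst))
          (h.nonneg ht))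
      · have hzs : z t / 2 < z s :=
          hsub ⟨hst.le, hs.2.trans_lt (hr.2.trans_le (min_le_left _ _))⟩
        exact max_le (le_max_of_le_right (by linarith [hmono hs' hr' hs.2]))
          (le_max_of_le_left (h.nonneg ht))
    rcases le_max_iff.1 key with h' | h'
    · exact h'
    · linarith
  · refine ⟨t + 1, by linarith, fun r hr => ?_⟩
    rw [hS, hS, lsExtend_of_le ht.1 hr.1, lsExtend_of_le ht.1 le_rfl]

theorem measure_setOf_pos_eq_zero (h : IsSkorokhodRegulator T y z)
    (hmono : MonotoneOn y (Icc 0 T)) (hz : ∀ t ∈ Icc 0 T, 0 ≤ z t)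
    (hlsc : ∀ t ∈ Ico 0 T, LowerSemicontinuousWithinAt z (Icc t T) t)
    (hS : ∀ t, S t = lsExtend T y t) :
    S.measure {t | t ∈ Icc 0 T ∧ 0 < z t} = 0 := by
  refine measure_eq_zero_of_forall_Ico fun t ⟨ht, hzt⟩ => ?_
  obtain ⟨t', htt', hflat⟩ :=
    h.exists_flat hmono hz hS ht hzt fun htT => hlsc t ⟨ht.1, htT⟩
  refine ⟨t', htt', ?_⟩
  have hleft : leftLim S t' ≤ S t :=
    le_of_tendsto (S.mono.tendsto_leftLim t') <| Filter.mem_of_superset (Ioo_mem_nhdsLT htt')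
      fun r hr => hflat r ⟨hr.1.le, hr.2⟩
  have hjump : S t ≤ leftLim S t :=
    (hS t).trans (lsExtend_of_mem_Icc ht) ▸ h.le_leftLim hz hS ht hzt
  rw [S.measure_Ico, ENNReal.ofReal_eq_zero, sub_nonpos]
  exact hleft.trans hjump

end IsSkorokhodRegulator

theorem max_sub_le_of_monotoneOn (hmono : MonotoneOn y (Icc 0 T)) (h0 : 0 ≤ y 0)
    (hz : ∀ t ∈ Icc 0 T, 0 ≤ z t) (ht : t ∈ Icc 0 T) {s : ℝ} (hs : s ∈ Icc 0 t) :
    max (y s - z s) 0 ≤ y t :=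
  have hs' : s ∈ Icc 0 T := ⟨hs.1, hs.2.trans ht.2⟩
  max_le ((sub_le_self _ (hz s hs')).trans (hmono hs' ht hs.2))
    (h0.trans (hmono ⟨le_rfl, ht.1.trans ht.2⟩ ht ht.1))

theorem isSkorokhodRegulator_of_measure_eq_zero {S : StieltjesFunction ℝ}
    (hmono : MonotoneOn y (Icc 0 T)) (h0 : 0 ≤ y 0) (hz : ∀ t ∈ Icc 0 T, 0 ≤ z t)
    (hS : ∀ t, S t = lsExtend T y t) (hnull : S.measure {t | t ∈ Icc 0 T ∧ 0 < z t} = 0) :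
    IsSkorokhodRegulator T y z := by
  intro t ht
  have hy := fun s => max_sub_le_of_monotoneOn hmono h0 hz ht (s := s)
  have hbdd : BddAbove (range fun s : Icc (0:ℝ) t => max (y s - z s) 0) :=
    ⟨y t, forall_mem_range.2 fun s => hy s s.2⟩
  set a := ⨆ s : Icc (0:ℝ) t, max (y s - z s) 0
  have hterm : ∀ s ∈ Icc 0 t, max (y s - z s) 0 ≤ a := fun s hs => le_ciSup hbdd ⟨s, hs⟩
  have ha : 0 ≤ a := (le_max_right _ _).trans (hterm 0 (left_mem_Icc.2 ht.1))
  have : Nonempty (Icc (0:ℝ) t) := ⟨⟨0, left_mem_Icc.2 ht.1⟩⟩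
  refine le_antisymm ?_ (ciSup_le fun s => hy s s.2)
  -- up to the `S`-null set `{z > 0}`, `Iic t` lies where `S ≤ a`
  have hcover : Iic t ⊆ (Iic t ∩ {x | S x ≤ a}) ∪ {s | s ∈ Icc 0 T ∧ 0 < z s} := by
    intro x hx
    rcases lt_or_ge x 0 with hx0 | hx0
    · exact Or.inl ⟨hx, by simpa [hS, lsExtend_of_neg hx0] using ha⟩
    have hx' : x ∈ Icc 0 T := ⟨hx0, hx.trans ht.2⟩
    rcases (hz x hx').eq_or_lt with hzx | hzx
    · refine Or.inl ⟨hx, ?_⟩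
      have := hterm x ⟨hx0, hx⟩
      rwa [← hzx, sub_zero, max_eq_left (h0.trans (hmono ⟨le_rfl, ht.1.trans ht.2⟩ hx' hx0)),
        ← lsExtend_of_mem_Icc (y := y) hx', ← hS] at this
    · exact Or.inr ⟨hx', hzx⟩
  have hlim : Tendsto S atBot (𝓝 0) := tendsto_lsExtend_atBot.congr fun t => (hS t).symm
  have hmeas : ENNReal.ofReal (y t) ≤ ENNReal.ofReal a := by
    calc ENNReal.ofReal (y t) = S.measure (Iic t) := by
          rw [S.measure_Iic hlim, hS, lsExtend_of_mem_Icc ht, sub_zero]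
      _ ≤ S.measure (Iic t ∩ {x | S x ≤ a}) + 0 :=
          hnull ▸ (measure_mono hcover).trans (measure_union_le _ _)
      _ ≤ ENNReal.ofReal (a - 0) := by
          rw [add_zero]
          exact S.measure_Iic_inter_setOf_le hlim a t
      _ = ENNReal.ofReal a := by rw [sub_zero]
  exact (ENNReal.ofReal_le_ofReal_iff ha).1 hmeas

end Regulator

section KernelIterates

variable {F : ℝ → ℝ → ℝ}

theorem lintegral_ofReal_le_kernelOpNorm (F : ℝ → ℝ → ℝ) {v : ℝ} (hv : v ∈ Icc (0:ℝ) 1) :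
    ∫⁻ u in Icc (0:ℝ) 1, ENNReal.ofReal (F u v) ≤ kernelOpNorm F :=
  (lintegral_mono fun _ => ENNReal.ofReal_le_ofReal (le_abs_self _)).trans
    (le_biSup (fun v => ∫⁻ u in Icc (0:ℝ) 1, ENNReal.ofReal |F u v|) hv)

theorem measurable_uncurry_kernelIter (hF : Measurable (uncurry F)) (n : ℕ) :
    Measurable (uncurry (kernelIter F n)) := by
  induction n with
  | zero => exact hF
  | succ n ih =>
    have h : Measurable fun p : (ℝ × ℝ) × ℝ => F p.1.1 p.2 * kernelIter F n p.2 p.1.2 :=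
      (hF.comp (measurable_fst.fst.prodMk measurable_snd)).mul
        (ih.comp (measurable_snd.prodMk measurable_fst.snd))
    exact h.stronglyMeasurable.integral_prod_right'.measurable

theorem kernelIter_nonneg (hF : ∀ u ∈ Icc (0:ℝ) 1, ∀ v ∈ Icc (0:ℝ) 1, 0 ≤ F u v) (n : ℕ) :
    ∀ u ∈ Icc (0:ℝ) 1, ∀ v ∈ Icc (0:ℝ) 1, 0 ≤ kernelIter F n u v := by
  induction n with
  | zero => exact hF
  | succ n ih =>
    intro u hu v hv
    exact setIntegral_nonneg measurableSet_Icc fun w hw =>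
      mul_nonneg (hF u hu w hw) (ih w hw v hv)

/-- Unlike `kernelIter`, never meets the junk value of a non-integrable Bochner integral. -/
noncomputable def kernelIterENN (F : ℝ → ℝ → ℝ) : ℕ → ℝ → ℝ → ℝ≥0∞
  | 0 => fun u v => ENNReal.ofReal (F u v)
  | n + 1 => fun u v => ∫⁻ w in Icc (0:ℝ) 1, ENNReal.ofReal (F u w) * kernelIterENN F n w v

theorem measurable_uncurry_kernelIterENN (hF : Measurable (uncurry F)) (n : ℕ) :
    Measurable (uncurry (kernelIterENN F n)) := by
  induction n with
  | zero => exact hF.ennreal_ofReal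
  | succ n ih =>
    exact ((hF.comp (measurable_fst.fst.prodMk measurable_snd)).ennreal_ofReal.mul
      (ih.comp (measurable_snd.prodMk measurable_fst.snd))).lintegral_prod_right'

theorem lintegral_kernelIterENN_le_one (hF : Measurable (uncurry F))
    (hcol : ∀ v ∈ Icc (0:ℝ) 1, ∫⁻ u in Icc (0:ℝ) 1, ENNReal.ofReal (F u v) ≤ 1) (n : ℕ) :
    ∀ v ∈ Icc (0:ℝ) 1, ∫⁻ u in Icc (0:ℝ) 1, kernelIterENN F n u v ≤ 1 := by
  induction n with
  | zero => exact hcol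
  | succ n ih =>
    intro v hv
    have hm : Measurable fun p : ℝ × ℝ => ENNReal.ofReal (F p.1 p.2) * kernelIterENN F n p.2 v :=
      hF.ennreal_ofReal.mul
        ((measurable_uncurry_kernelIterENN hF n).comp (measurable_snd.prodMk measurable_const))
    calc ∫⁻ u in Icc (0:ℝ) 1, kernelIterENN F (n + 1) u v
        = ∫⁻ w in Icc (0:ℝ) 1, (∫⁻ u in Icc (0:ℝ) 1, ENNReal.ofReal (F u w)) *
            kernelIterENN F n w v := by
          simp only [kernelIterENN]
          rw [lintegral_lintegral_swap hm.aemeasurable]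
          refine lintegral_congr fun w => lintegral_mul_const _ ?_
          exact (hF.comp (measurable_id.prodMk measurable_const)).ennreal_ofReal
      _ ≤ ∫⁻ w in Icc (0:ℝ) 1, kernelIterENN F n w v := by
          refine setLIntegral_mono' measurableSet_Icc fun w hw => ?_
          exact mul_le_of_le_one_left' (hcol w hw)
      _ ≤ 1 := ih v hv

theorem kernelIterENN_ae_eq (hF : Measurable (uncurry F))
    (hnn : ∀ u ∈ Icc (0:ℝ) 1, ∀ v ∈ Icc (0:ℝ) 1, 0 ≤ F u v)
    (hcol : ∀ v ∈ Icc (0:ℝ) 1, ∫⁻ u in Icc (0:ℝ) 1, ENNReal.ofReal (F u v) ≤ 1) (n : ℕ) :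
    ∀ v ∈ Icc (0:ℝ) 1, ∀ᵐ u ∂volume.restrict (Icc (0:ℝ) 1),
      kernelIterENN F n u v = ENNReal.ofReal (kernelIter F n u v) := by
  induction n with
  | zero => exact fun _ _ => .of_forall fun _ => rfl
  | succ n ih =>
    intro v hv
    have hfin : ∀ᵐ u ∂volume.restrict (Icc (0:ℝ) 1), kernelIterENN F (n + 1) u v < ⊤ :=
      ae_lt_top ((measurable_uncurry_kernelIterENN hF (n + 1)).comp
          (measurable_id.prodMk measurable_const))
        ((lintegral_kernelIterENN_le_one hF hcol (n + 1) v hv).trans_lt ENNReal.one_lt_top).ne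
    filter_upwards [hfin, ae_restrict_mem measurableSet_Icc] with u hu_fin hu
    have hnn' : 0 ≤ᵐ[volume.restrict (Icc (0:ℝ) 1)] fun w => F u w * kernelIter F n w v :=
      ae_restrict_of_forall_mem measurableSet_Icc fun w hw =>
        mul_nonneg (hnn u hu w hw) (kernelIter_nonneg hnn n w hw v hv)
    have hlin : kernelIterENN F (n + 1) u v =
        ∫⁻ w in Icc (0:ℝ) 1, ENNReal.ofReal (F u w * kernelIter F n w v) := by
      refine lintegral_congr_ae ?_
      filter_upwards [ih v hv, ae_restrict_mem measurableSet_Icc] with w hw hw'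
      rw [hw, ENNReal.ofReal_mul (hnn u hu w hw')]
    have hint :
        Integrable (fun w => F u w * kernelIter F n w v) (volume.restrict (Icc (0:ℝ) 1)) := by
      refine ⟨((hF.comp (measurable_const.prodMk measurable_id)).mul
        ((measurable_uncurry_kernelIter hF n).comp
          (measurable_id.prodMk measurable_const))).aestronglyMeasurable, ?_⟩
      rw [hasFiniteIntegral_iff_ofReal hnn', ← hlin]
      exact hu_fin
    rw [hlin, kernelIter, kernelComp, ofReal_integral_eq_lintegral_ofReal hint hnn']

theorem le_lintegral_kernelIterENN_mul {G : ℝ → ℝ≥0∞} (hF : Measurable (uncurry F))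
    (hG : Measurable G)
    (hle : ∀ u ∈ Icc (0:ℝ) 1, G u ≤ ∫⁻ v in Icc (0:ℝ) 1, ENNReal.ofReal (F u v) * G v)
    (n : ℕ) : ∀ u ∈ Icc (0:ℝ) 1, G u ≤ ∫⁻ v in Icc (0:ℝ) 1, kernelIterENN F n u v * G v := by
  induction n with
  | zero => exact hle
  | succ n ih =>
    intro u hu
    have hK := measurable_uncurry_kernelIterENN hF n
    have hFu : Measurable fun v => ENNReal.ofReal (F u v) :=
      (hF.comp (measurable_const.prodMk measurable_id)).ennreal_ofReal
    calc G u ≤ ∫⁻ v in Icc (0:ℝ) 1, ENNReal.ofReal (F u v) *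
          ∫⁻ w in Icc (0:ℝ) 1, kernelIterENN F n v w * G w :=
          (hle u hu).trans <|
            setLIntegral_mono' measurableSet_Icc fun v hv => by gcongr; exact ih v hv
      _ = ∫⁻ w in Icc (0:ℝ) 1, ∫⁻ v in Icc (0:ℝ) 1,
          ENNReal.ofReal (F u v) * kernelIterENN F n v w * G w := by
          rw [← lintegral_lintegral_swap ((hFu.comp measurable_fst).mul hK |>.mul
            (hG.comp measurable_snd)).aemeasurable]
          refine lintegral_congr fun v => ?_
          have hm : Measurable fun w => kernelIterENN F n v w * G w := hK.of_uncurry_left.mul hG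
          rw [← lintegral_const_mul _ hm]
          simp only [mul_assoc]
      _ = ∫⁻ w in Icc (0:ℝ) 1, kernelIterENN F (n + 1) u w * G w := by
          refine lintegral_congr fun w => ?_
          have hm : Measurable fun v => ENNReal.ofReal (F u v) * kernelIterENN F n v w :=
            hFu.mul hK.of_uncurry_right
          rw [kernelIterENN, ← lintegral_mul_const _ hm]

theorem lintegral_eq_zero_of_le_kernel {γ : ℝ} {k : ℕ} {G : ℝ → ℝ≥0∞}
    (hF : IsReflKernel F γ k) (hG : Measurable G) (hfin : ∫⁻ u in Icc (0:ℝ) 1, G u ≠ ⊤)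
    (hle : ∀ u ∈ Icc (0:ℝ) 1, G u ≤ ∫⁻ v in Icc (0:ℝ) 1, ENNReal.ofReal (F u v) * G v) :
    ∫⁻ u in Icc (0:ℝ) 1, G u = 0 := by
  have hcol : ∀ v ∈ Icc (0:ℝ) 1, ∫⁻ u in Icc (0:ℝ) 1, ENNReal.ofReal (F u v) ≤ 1 :=
    fun v hv => (lintegral_ofReal_le_kernelOpNorm F hv).trans hF.opNorm_le_one
  have hK := measurable_uncurry_kernelIterENN hF.meas (k - 1)
  have hcolγ : ∀ v ∈ Icc (0:ℝ) 1,
      ∫⁻ u in Icc (0:ℝ) 1, kernelIterENN F (k - 1) u v ≤ ENNReal.ofReal γ := fun v hv => by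
    rw [lintegral_congr_ae (kernelIterENN_ae_eq hF.meas hF.nonneg hcol (k - 1) v hv)]
    exact (lintegral_ofReal_le_kernelOpNorm _ hv).trans hF.iter_le
  have hcontr : ∫⁻ u in Icc (0:ℝ) 1, G u ≤ ENNReal.ofReal γ * ∫⁻ u in Icc (0:ℝ) 1, G u :=
    calc ∫⁻ u in Icc (0:ℝ) 1, G u
        ≤ ∫⁻ u in Icc (0:ℝ) 1, ∫⁻ v in Icc (0:ℝ) 1, kernelIterENN F (k - 1) u v * G v :=
          setLIntegral_mono' measurableSet_Icc
            (le_lintegral_kernelIterENN_mul hF.meas hG hle (k - 1))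
      _ = ∫⁻ v in Icc (0:ℝ) 1, (∫⁻ u in Icc (0:ℝ) 1, kernelIterENN F (k - 1) u v) * G v := by
          rw [lintegral_lintegral_swap (hK.mul (hG.comp measurable_snd)).aemeasurable]
          exact lintegral_congr fun v =>
            lintegral_mul_const _ (hK.comp (measurable_id.prodMk measurable_const))
      _ ≤ ∫⁻ v in Icc (0:ℝ) 1, ENNReal.ofReal γ * G v :=
          setLIntegral_mono' measurableSet_Icc fun v hv => by gcongr; exact hcolγ v hv
      _ = ENNReal.ofReal γ * ∫⁻ u in Icc (0:ℝ) 1, G u := lintegral_const_mul _ hG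
  have hγ : ENNReal.ofReal γ < 1 := ENNReal.ofReal_lt_one.2 hF.gamma_mem.2
  by_contra hne
  exact (hcontr.trans_lt (by simpa using ENNReal.mul_lt_mul_left hne hfin hγ)).false

section Uniqueness

variable {T : ℝ} {X F Y W : ℝ → ℝ → ℝ}

theorem measurable_biSup_timeGrid {f : ℝ → ℝ → ℝ}
    (hf : ∀ s ∈ Icc (0:ℝ) T, Measurable fun u => f u s) :
    Measurable fun u => ⨆ s ∈ timeGrid T, ENNReal.ofReal |f u s| :=
  .biSup _ (timeGrid_countable T) fun s hs => (hf s hs.1).abs.ennreal_ofReal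

theorem lintegral_biSup_timeGrid_sub_ne_top (hY : MemDT T Y) (hW : MemDT T W) :
    ∫⁻ u in Icc (0:ℝ) 1, ⨆ s ∈ timeGrid T, ENNReal.ofReal |Y u s - W u s| ≠ ⊤ := by
  have hle : ∀ (f : ℝ → ℝ → ℝ) u,
      ⨆ s ∈ timeGrid T, ENNReal.ofReal |f u s| ≤ pathSup T f u := fun _ _ =>
    biSup_mono fun _ hs => hs.1
  refine ne_top_of_le_ne_top (ENNReal.add_ne_top.2 ⟨hY.finite, hW.finite⟩) ?_
  calc ∫⁻ u in Icc (0:ℝ) 1, ⨆ s ∈ timeGrid T, ENNReal.ofReal |Y u s - W u s|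
      ≤ ∫⁻ u in Icc (0:ℝ) 1, ((⨆ s ∈ timeGrid T, ENNReal.ofReal |Y u s|) +
          ⨆ s ∈ timeGrid T, ENNReal.ofReal |W u s|) := by
        refine lintegral_mono fun u => iSup₂_le fun s hs => ?_
        calc ENNReal.ofReal |Y u s - W u s| ≤ ENNReal.ofReal |Y u s| + ENNReal.ofReal |W u s| :=
              (ENNReal.ofReal_le_ofReal (abs_sub _ _)).trans ENNReal.ofReal_add_le
          _ ≤ _ := add_le_add (le_biSup (fun s => ENNReal.ofReal |Y u s|) hs)
              (le_biSup (fun s => ENNReal.ofReal |W u s|) hs)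
    _ = (∫⁻ u in Icc (0:ℝ) 1, ⨆ s ∈ timeGrid T, ENNReal.ofReal |Y u s|) +
          ∫⁻ u in Icc (0:ℝ) 1, ⨆ s ∈ timeGrid T, ENNReal.ofReal |W u s| :=
        lintegral_add_left (measurable_biSup_timeGrid hY.meas) _
    _ ≤ TNorm T Y + TNorm T W := add_le_add (lintegral_mono (hle Y)) (lintegral_mono (hle W))

theorem ofReal_abs_kernelApply_sub_le {u s : ℝ} (hFm : Measurable (uncurry F))
    (hF : ∀ v ∈ Icc (0:ℝ) 1, 0 ≤ F u v) (hY : Measurable fun v => Y v s)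
    (hW : Measurable fun v => W v s) :
    ENNReal.ofReal |kernelApply F Y u s - kernelApply F W u s| ≤
      ∫⁻ v in Icc (0:ℝ) 1, ENNReal.ofReal (F u v) * ENNReal.ofReal |Y v s - W v s| := by
  refine (ofReal_abs_integral_sub_le (hFm.of_uncurry_left.mul hY).aestronglyMeasurable
    (hFm.of_uncurry_left.mul hW).aestronglyMeasurable).trans
    (setLIntegral_mono' measurableSet_Icc fun v hv => ?_)
  simp only [Pi.mul_apply]
  rw [← mul_sub, abs_mul, abs_of_nonneg (hF v hv), ENNReal.ofReal_mul (hF v hv)]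

theorem ofReal_abs_piMap_sub_le {u t : ℝ} {G : ℝ → ℝ≥0∞} (hFm : Measurable (uncurry F))
    (hF : ∀ v ∈ Icc (0:ℝ) 1, 0 ≤ F u v) (hY : MemDT T Y) (hW : MemDT T W)
    (hG : ∀ v ∈ Icc (0:ℝ) 1, ∀ s ∈ Icc (0:ℝ) T, ENNReal.ofReal |Y v s - W v s| ≤ G v)
    (ht : t ∈ Icc (0:ℝ) T) :
    ENNReal.ofReal |piMap X F Y u t - piMap X F W u t| ≤
      ∫⁻ v in Icc (0:ℝ) 1, ENNReal.ofReal (F u v) * G v := by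
  have : Nonempty (Icc (0:ℝ) t) := ⟨⟨0, left_mem_Icc.2 ht.1⟩⟩
  refine (ofReal_abs_iSup_sub_iSup_le _ _).trans (iSup_le fun s => ?_)
  have hs : (s : ℝ) ∈ Icc (0:ℝ) T := ⟨s.2.1, s.2.2.trans ht.2⟩
  calc ENNReal.ofReal
        |max (-X u s + kernelApply F Y u s) 0 - max (-X u s + kernelApply F W u s) 0|
      ≤ ENNReal.ofReal |kernelApply F Y u s - kernelApply F W u s| := by
        refine ENNReal.ofReal_le_ofReal ((abs_max_sub_max_le_abs _ _ _).trans_eq ?_)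
        rw [add_sub_add_left_eq_sub]
    _ ≤ _ := ofReal_abs_kernelApply_sub_le hFm hF (hY.meas s hs) (hW.meas s hs)
    _ ≤ _ := setLIntegral_mono' measurableSet_Icc fun v hv => by gcongr; exact hG v hv s hs

theorem eq_of_piMap_fixed {γ : ℝ} {k : ℕ} (hF : IsReflKernel F γ k) (hY : MemDT T Y)
    (hW : MemDT T W) (hYfp : ∀ u ∈ Icc (0:ℝ) 1, ∀ t ∈ Icc (0:ℝ) T, Y u t = piMap X F Y u t)
    (hWfp : ∀ u ∈ Icc (0:ℝ) 1, ∀ t ∈ Icc (0:ℝ) T, W u t = piMap X F W u t) :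
    ∀ u ∈ Icc (0:ℝ) 1, ∀ t ∈ Icc (0:ℝ) T, W u t = Y u t := by
  set G : ℝ → ℝ≥0∞ := fun u => ⨆ s ∈ timeGrid T, ENNReal.ofReal |Y u s - W u s|
  have hGm : Measurable G :=
    measurable_biSup_timeGrid fun s hs => (hY.meas s hs).sub (hW.meas s hs)
  have hdom : ∀ v ∈ Icc (0:ℝ) 1, ∀ s ∈ Icc (0:ℝ) T, ENNReal.ofReal |Y v s - W v s| ≤ G v :=
    fun v hv s hs => le_biSup_timeGrid (fun r hr =>
      ENNReal.continuous_ofReal.continuousAt.comp_continuousWithinAt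
        ((hY.rightCont v hv r hr).sub (hW.rightCont v hv r hr)).abs) hs
  have hbound : ∀ u ∈ Icc (0:ℝ) 1, ∀ t ∈ Icc (0:ℝ) T,
      ENNReal.ofReal |Y u t - W u t| ≤ ∫⁻ v in Icc (0:ℝ) 1, ENNReal.ofReal (F u v) * G v :=
    fun u hu t ht => by
      rw [hYfp u hu t ht, hWfp u hu t ht]
      exact ofReal_abs_piMap_sub_le hF.meas (hF.nonneg u hu) hY hW hdom ht
  have hG0 : G =ᵐ[volume.restrict (Icc (0:ℝ) 1)] 0 :=
    (lintegral_eq_zero_iff hGm).1 <| lintegral_eq_zero_of_le_kernel hF hGm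
      (lintegral_biSup_timeGrid_sub_ne_top hY hW)
      fun u hu => iSup₂_le fun t ht => hbound u hu t ht.1
  intro u hu t ht
  have hFG : (fun v => ENNReal.ofReal (F u v) * G v) =ᵐ[volume.restrict (Icc (0:ℝ) 1)] 0 :=
    hG0.mono fun v hv => by simp [hv]
  have h := hbound u hu t ht
  rw [lintegral_congr_ae hFG, Pi.zero_def, lintegral_zero, nonpos_iff_eq_zero,
    ENNReal.ofReal_eq_zero, abs_nonpos_iff, sub_eq_zero] at h
  exact h.symm

end Uniqueness

section Reflection

variable {T : ℝ} {X F Y Z : ℝ → ℝ → ℝ}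

theorem MemDTup.nonneg (hY : MemDTup T Y) {u t : ℝ} (hu : u ∈ Icc (0:ℝ) 1)
    (ht : t ∈ Icc (0:ℝ) T) : 0 ≤ Y u t :=
  (hY.nonneg_zero u hu).trans (hY.mono u hu ⟨le_rfl, ht.1.trans ht.2⟩ ht ht.1)

theorem lowerSemicontinuousWithinAt_of_eq_sub_kernelApply (hX : MemDT T X)
    (hFm : Measurable (uncurry F)) (hF : ∀ u ∈ Icc (0:ℝ) 1, ∀ v ∈ Icc (0:ℝ) 1, 0 ≤ F u v)
    (hY : MemDTup T Y)
    (hZ : ∀ u ∈ Icc (0:ℝ) 1, ∀ t ∈ Icc (0:ℝ) T, Z u t = X u t + Y u t - kernelApply F Y u t)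
    {u t : ℝ} (hu : u ∈ Icc (0:ℝ) 1) (ht : t ∈ Ico 0 T) :
    LowerSemicontinuousWithinAt (Z u) (Icc t T) t := by
  have hsub : Icc t T ⊆ Icc 0 T := Icc_subset_Icc_left ht.1
  have hK : UpperSemicontinuousWithinAt (kernelApply F Y u) (Icc t T) t := by
    refine upperSemicontinuousWithinAt_integral
      (fun s hs => (hFm.of_uncurry_left.mul (hY.memDT.meas s (hsub hs))).aestronglyMeasurable)
      ?_ ?_ ?_ <;> filter_upwards [ae_restrict_mem measurableSet_Icc] with v hv
    · exact mul_nonneg (hF u hu v hv) (hY.nonneg hv ⟨ht.1, ht.2.le⟩)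
    · exact fun s hs s' hs' hss' =>
        mul_le_mul_of_nonneg_left (hY.mono v hv (hsub hs) (hsub hs') hss') (hF u hu v hv)
    · exact continuousWithinAt_const.mul (hY.memDT.rightCont v hv t ht)
  have hXY : ContinuousWithinAt (fun s => X u s + Y u s) (Icc t T) t :=
    ((hX.rightCont u hu t ht).add (hY.memDT.rightCont u hu t ht)).mono Icc_subset_Ici_self
  intro c hc
  have hZt := hZ u hu t (hsub (left_mem_Icc.2 ht.2.le))
  have hd : 0 < Z u t - c := by linarith
  filter_upwards [hK _ (lt_add_of_pos_right _ (half_pos hd)),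
    hXY.eventually (lt_mem_nhds (sub_lt_self _ (half_pos hd))), self_mem_nhdsWithin]
    with s h1 h2 h3
  rw [hZ u hu s (hsub h3)]
  linarith

theorem piMap_eq_iSup_sub
    (hZ : ∀ u ∈ Icc (0:ℝ) 1, ∀ t ∈ Icc (0:ℝ) T, Z u t = X u t + Y u t - kernelApply F Y u t)
    {u t : ℝ} (hu : u ∈ Icc (0:ℝ) 1) (ht : t ∈ Icc (0:ℝ) T) :
    piMap X F Y u t = ⨆ s : Icc (0:ℝ) t, max (Y u s - Z u s) 0 := by
  refine iSup_congr fun s => ?_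
  rw [hZ u hu s ⟨s.2.1, s.2.2.trans ht.2⟩]
  ring_nf

theorem piMap_fixed_iff
    (hZ : ∀ u ∈ Icc (0:ℝ) 1, ∀ t ∈ Icc (0:ℝ) T, Z u t = X u t + Y u t - kernelApply F Y u t) :
    (∀ u ∈ Icc (0:ℝ) 1, ∀ t ∈ Icc (0:ℝ) T, Y u t = piMap X F Y u t) ↔
      ∀ u ∈ Icc (0:ℝ) 1, IsSkorokhodRegulator T (Y u) (Z u) := by
  refine forall₂_congr fun u hu => forall₂_congr fun t ht => ?_
  rw [piMap_eq_iSup_sub hZ hu ht]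

end Reflection

/-- a feasible `Y` is the unique fixed point of `π_{X,F}` in `D_T^↑(L1)` iff
the pair `(Y, Z)` satisfies the complementarity property (with the convention
`Y_u(0−) = 0`, so the Stieltjes measure has an atom of mass `Y_u(0)` at `0`). -/
theorem complementarity_characterization
    (T : ℝ) (hT : 0 < T) (X F Y Z : ℝ → ℝ → ℝ) (γ : ℝ) (k : ℕ)
    (hX : MemDT T X) (hF : IsReflKernel F γ k) (hY : MemDTup T Y)
    (hZdef : ∀ u ∈ Icc (0:ℝ) 1, ∀ t ∈ Icc (0:ℝ) T,
      Z u t = X u t + Y u t - kernelApply F Y u t)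
    (hfeas : ∀ u ∈ Icc (0:ℝ) 1, ∀ t ∈ Icc (0:ℝ) T, 0 ≤ Z u t) :
    ((∀ u ∈ Icc (0:ℝ) 1, ∀ t ∈ Icc (0:ℝ) T, Y u t = piMap X F Y u t) ∧
      (∀ W : ℝ → ℝ → ℝ, MemDTup T W →
        (∀ u ∈ Icc (0:ℝ) 1, ∀ t ∈ Icc (0:ℝ) T, W u t = piMap X F W u t) →
        ∀ u ∈ Icc (0:ℝ) 1, ∀ t ∈ Icc (0:ℝ) T, W u t = Y u t))
    ↔ Complementary T Y Z := by
  rw [piMap_fixed_iff hZdef]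
  constructor
  · rintro ⟨hreg, -⟩ u hu S hS
    exact (hreg u hu).measure_setOf_pos_eq_zero (hY.mono u hu) (hfeas u hu)
      (fun t ht => lowerSemicontinuousWithinAt_of_eq_sub_kernelApply hX hF.meas hF.nonneg hY
        hZdef hu ht) hS
  · intro hcomp
    have hreg : ∀ u ∈ Icc (0:ℝ) 1, IsSkorokhodRegulator T (Y u) (Z u) := fun u hu => by
      obtain ⟨S, hS⟩ := exists_stieltjesFunction_lsExtend hT.le (hY.mono u hu)
        (hY.nonneg_zero u hu) (hY.memDT.rightCont u hu)
      exact isSkorokhodRegulator_of_measure_eq_zero (hY.mono u hu) (hY.nonneg_zero u hu)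
        (hfeas u hu) hS (hcomp u hu S hS)
    exact ⟨hreg, fun W hW hWfp =>
      eq_of_piMap_fixed hF hY.memDT hW.memDT ((piMap_fixed_iff hZdef).2 hreg) hWfp⟩
end KernelIterates
end

section
/- Let T > 0 and let F be a reflection kernel with bounded parameters (γ, k). Then for all X¹, X² ∈ D_T(L1): ‖Ψ_F(X¹) − Ψ_F(X²)‖_{T,1} ≤ (k/(1−γ)) ‖X¹ − X²‖_{T,1}, and ‖Φ_F(X¹) − Φ_F(X²)‖_{T,1} ≤ (1 + 2k/(1−γ)) ‖X¹ − X²‖_{T,1}. -/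
open MeasureTheory Set Filter
open scoped ENNReal NNReal

noncomputable section

/-- `Y = Ψ_F(X)`: `Y` is the (unique) fixed point of `π_{X,F}` in `D_T^↑(L1)`. -/
def IsRegulator (T : ℝ) (X F Y : ℝ → ℝ → ℝ) : Prop :=
  MemDTup T Y ∧ ∀ u ∈ Icc (0:ℝ) 1, ∀ t ∈ Icc (0:ℝ) T, Y u t = piMap X F Y u t

end

/-!
Let `a(u) = sup_{t ≤ T} |Ψ_F(X¹)_u(t) - Ψ_F(X²)_u(t)|` and `b(u) = sup_{t ≤ T} |X¹_u(t) - X²_u(t)|`.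
Since `π_{X,F}` is built from `max · 0` and a running supremum, both `1`-Lipschitz, the two
fixed-point equations give the renewal inequality `a ≤ b + |F| a` pointwise in `u`. Iterated `k`
times it reads `a ≤ ∑_{j<k} |F|^j b + |F|^k a`; integrating in `u`, the column bounds
`‖F‖_op ≤ 1` and `‖F^(k)‖_op ≤ γ` give `‖a‖₁ ≤ k ‖b‖₁ + γ ‖a‖₁`, and `‖a‖₁ < ∞` because both
regulators lie in `D_T(L1)`. For `Φ_F`, `|ΔΦ| ≤ |ΔX| + |ΔΨ| + |F| |ΔΨ|` gives
`‖ΔΦ‖ ≤ ‖ΔX‖ + 2 ‖ΔΨ‖`.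

The iterates of `|F|` are taken `ℝ≥0∞`-valued (`lkernelApply`, `lkernelComp`), where Tonelli needs
no integrability; right-continuity of the paths makes the running suprema measurable in `u`.
-/

open Function (uncurry)

lemma abs_ciSup_sub_ciSup_le {ι : Sort*} [Nonempty ι] {f g : ι → ℝ} {C : ℝ}
    (h : ∀ i, |f i - g i| ≤ C) : |(⨆ i, f i) - ⨆ i, g i| ≤ C := by
  have hle : ∀ i, f i ≤ g i + C ∧ g i ≤ f i + C := fun i => by
    constructor <;> linarith [abs_sub_le_iff.1 (h i)]
  have bdd : ∀ {f g : ι → ℝ}, BddAbove (range g) → (∀ i, f i ≤ g i + C) → BddAbove (range f) :=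
    fun ⟨M, hM⟩ hfg => ⟨M + C, forall_mem_range.2 fun i =>
      (hfg i).trans (add_le_add_left (hM (mem_range_self i)) C)⟩
  by_cases hf : BddAbove (range f)
  · have hg := bdd hf fun i => (hle i).2
    rw [abs_sub_le_iff, sub_le_iff_le_add', sub_le_iff_le_add']
    exact ⟨ciSup_le fun i => (hle i).1.trans (add_le_add_left (le_ciSup hg i) C),
      ciSup_le fun i => (hle i).2.trans (add_le_add_left (le_ciSup hf i) C)⟩
  · have hg : ¬ BddAbove (range g) := fun hg => hf (bdd hg fun i => (hle i).1)
    rw [Real.iSup_of_not_bddAbove hf, Real.iSup_of_not_bddAbove hg, sub_zero, abs_zero]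
    exact (abs_nonneg _).trans (h (Classical.arbitrary ι))

/-- No integrability is needed: if `f - g` is integrable then `f` and `g` are integrable
together, and if neither is, both integrals are `0`. -/
lemma enorm_integral_sub_integral_le {α E : Type*} [MeasurableSpace α] {μ : Measure α}
    [NormedAddCommGroup E] [NormedSpace ℝ E] {f g : α → E}
    (hfg : AEStronglyMeasurable (f - g) μ) :
    ‖∫ a, f a ∂μ - ∫ a, g a ∂μ‖ₑ ≤ ∫⁻ a, ‖f a - g a‖ₑ ∂μ := by
  by_cases hfin : ∫⁻ a, ‖f a - g a‖ₑ ∂μ = ⊤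
  · exact hfin ▸ le_top
  have hi : Integrable (f - g) μ := ⟨hfg, lt_top_iff_ne_top.2 hfin⟩
  by_cases hg : Integrable g μ
  · have hf : Integrable f μ := by simpa using hi.add hg
    rw [← integral_sub hf hg]
    exact enorm_integral_le_lintegral_enorm _
  · have hf : ¬ Integrable f μ := fun hf => hg (by simpa using hf.sub hi)
    simp [integral_undef hf, integral_undef hg]

lemma le_ofReal_div_mul_of_le_add {a b : ℝ≥0∞} {c γ : ℝ} (ha : a ≠ ⊤) (hγ₀ : 0 ≤ γ)
    (hγ₁ : γ < 1) (h : a ≤ ENNReal.ofReal c * b + ENNReal.ofReal γ * a) :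
    a ≤ ENNReal.ofReal (c / (1 - γ)) * b := by
  have h1γ : 0 < 1 - γ := sub_pos.2 hγ₁
  have hsub : ENNReal.ofReal (1 - γ) * a ≤ ENNReal.ofReal c * b := by
    rw [ENNReal.ofReal_sub _ hγ₀, ENNReal.ofReal_one, ENNReal.sub_mul fun _ _ => ha, one_mul]
    exact tsub_le_iff_right.2 h
  rw [ENNReal.ofReal_div_of_pos h1γ, ← ENNReal.mul_div_right_comm,
    ENNReal.le_div_iff_mul_le (Or.inl (ENNReal.ofReal_pos.2 h1γ).ne')
      (Or.inl ENNReal.ofReal_ne_top), mul_comm]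
  exact hsub

section PathSup

variable {T : ℝ} {f g : ℝ → ℝ → ℝ} {u : ℝ}

lemma ofReal_abs_le_pathSup {t : ℝ} (ht : t ∈ Icc (0:ℝ) T) :
    ENNReal.ofReal |f u t| ≤ pathSup T f u :=
  le_biSup (fun t => ENNReal.ofReal |f u t|) ht

lemma pathSup_le {c : ℝ≥0∞} (h : ∀ t ∈ Icc (0:ℝ) T, ENNReal.ofReal |f u t| ≤ c) :
    pathSup T f u ≤ c :=
  iSup₂_le h

lemma pathSup_sub_le :
    pathSup T (fun u t => f u t - g u t) u ≤ pathSup T f u + pathSup T g u :=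
  pathSup_le fun _ ht => (ENNReal.ofReal_le_ofReal (abs_sub _ _)).trans <|
    ENNReal.ofReal_add_le.trans (add_le_add (ofReal_abs_le_pathSup ht) (ofReal_abs_le_pathSup ht))

lemma pathSup_eq_biSup_rat (hrc : ∀ t ∈ Ico (0:ℝ) T, ContinuousWithinAt (f u) (Ici t) t) :
    pathSup T f u =
      ⨆ t ∈ Icc (0:ℝ) T ∩ insert T (range ((↑) : ℚ → ℝ)), ENNReal.ofReal |f u t| := by
  refine le_antisymm (pathSup_le fun t ht => ?_) (biSup_mono fun _ hs => hs.1)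
  set M := ⨆ t ∈ Icc (0:ℝ) T ∩ insert T (range ((↑) : ℚ → ℝ)), ENNReal.ofReal |f u t|
  rcases ht.2.eq_or_lt with rfl | htT
  · exact le_biSup (fun t => ENNReal.ofReal |f u t|) ⟨ht, mem_insert _ _⟩
  set s := Ioo t T ∩ range ((↑) : ℚ → ℝ)
  have hts : t ∈ closure s := by
    have hsub := Rat.denseRange_cast.open_subset_closure_inter (isOpen_Ioo (a := t) (b := T))
    have ht' : t ∈ closure (Ioo t T) := by
      rw [closure_Ioo htT.ne]; exact left_mem_Icc.2 htT.le
    simpa only [closure_closure] using closure_mono hsub ht'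
  have hcont : ContinuousWithinAt (fun t => ENNReal.ofReal |f u t|) s t :=
    (ENNReal.continuous_ofReal.comp continuous_abs).continuousAt.comp_continuousWithinAt
      ((hrc t ⟨ht.1, htT⟩).mono fun _ hr => le_of_lt hr.1.1)
  have hM : (fun t => ENNReal.ofReal |f u t|) '' s ⊆ Iic M := by
    rintro _ ⟨r, ⟨hr, hrat⟩, rfl⟩
    exact le_biSup (fun t => ENNReal.ofReal |f u t|)
      ⟨⟨ht.1.trans hr.1.le, hr.2.le⟩, mem_insert_of_mem _ hrat⟩
  exact closure_minimal hM isClosed_Iic (hcont.mem_closure_image hts)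

lemma MemDT.aemeasurable_pathSup (hf : MemDT T f) :
    AEMeasurable (pathSup T f) (volume.restrict (Icc (0:ℝ) 1)) := by
  refine (Measurable.biSup _ (((countable_range ((↑) : ℚ → ℝ)).insert T).mono inter_subset_right)
    fun t ht => ((hf.meas t ht.1).abs).ennreal_ofReal).aemeasurable.congr ?_
  filter_upwards [ae_restrict_mem measurableSet_Icc] with u hu
  exact (pathSup_eq_biSup_rat (hf.rightCont u hu)).symm

lemma MemDT.sub (hf : MemDT T f) (hg : MemDT T g) : MemDT T (fun u t => f u t - g u t) where
  rightCont u hu t ht := (hf.rightCont u hu t ht).sub (hg.rightCont u hu t ht)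
  leftLim u hu t ht := by
    obtain ⟨L₁, h₁⟩ := hf.leftLim u hu t ht
    obtain ⟨L₂, h₂⟩ := hg.leftLim u hu t ht
    exact ⟨L₁ - L₂, h₁.sub h₂⟩
  meas t ht := (hf.meas t ht).sub (hg.meas t ht)
  finite := by
    refine ne_top_of_le_ne_top (ENNReal.add_ne_top.2 ⟨hf.finite, hg.finite⟩) ?_
    calc TNorm T (fun u t => f u t - g u t)
        ≤ ∫⁻ u in Icc (0:ℝ) 1, (pathSup T f u + pathSup T g u) :=
          lintegral_mono fun _ => pathSup_sub_le
      _ = TNorm T f + TNorm T g := lintegral_add_left' hf.aemeasurable_pathSup _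

end PathSup

noncomputable def lkernelApply (K : ℝ → ℝ → ℝ≥0∞) (h : ℝ → ℝ≥0∞) : ℝ → ℝ≥0∞ :=
  fun u => ∫⁻ v in Icc (0:ℝ) 1, K u v * h v

noncomputable def lkernelComp (K L : ℝ → ℝ → ℝ≥0∞) : ℝ → ℝ → ℝ≥0∞ :=
  fun u v => lkernelApply K (fun w => L w v) u

section LKernel

variable {K L : ℝ → ℝ → ℝ≥0∞} {h h₁ h₂ : ℝ → ℝ≥0∞} {c : ℝ≥0∞}

lemma measurable_lkernelApply (hK : Measurable (uncurry K))
    (hh : AEMeasurable h (volume.restrict (Icc (0:ℝ) 1))) : Measurable (lkernelApply K h) := by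
  have heq : lkernelApply K h = lkernelApply K (hh.mk h) := funext fun u =>
    lintegral_congr_ae (hh.ae_eq_mk.mono fun v hv => congrArg (K u v * ·) hv)
  rw [heq]
  exact (hK.mul (hh.measurable_mk.comp measurable_snd)).lintegral_prod_right'

lemma measurable_lkernelComp (hK : Measurable (uncurry K)) (hL : Measurable (uncurry L)) :
    Measurable (uncurry (lkernelComp K L)) :=
  Measurable.lintegral_prod_right' (f := fun q : (ℝ × ℝ) × ℝ => K q.1.1 q.2 * L q.2 q.1.2)
    ((hK.comp (measurable_fst.fst.prodMk measurable_snd)).mul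
      (hL.comp (measurable_snd.prodMk measurable_fst.snd)))

lemma lkernelApply_mono (hle : ∀ v ∈ Icc (0:ℝ) 1, h₁ v ≤ h₂ v) (u : ℝ) :
    lkernelApply K h₁ u ≤ lkernelApply K h₂ u :=
  setLIntegral_mono' measurableSet_Icc fun v hv => mul_le_mul_right (hle v hv) _

lemma lkernelApply_add (hK : Measurable (uncurry K))
    (hh₁ : AEMeasurable h₁ (volume.restrict (Icc (0:ℝ) 1))) :
    lkernelApply K (h₁ + h₂) = lkernelApply K h₁ + lkernelApply K h₂ := funext fun u => by
  simp only [lkernelApply, Pi.add_apply, mul_add]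
  exact lintegral_add_left' ((hK.comp measurable_prodMk_left).aemeasurable.mul hh₁) _

lemma lkernelApply_lkernelApply (hK : Measurable (uncurry K)) (hL : Measurable (uncurry L))
    (hh : AEMeasurable h (volume.restrict (Icc (0:ℝ) 1))) :
    lkernelApply K (lkernelApply L h) = lkernelApply (lkernelComp K L) h := funext fun u => by
  have hm : AEMeasurable (uncurry fun w v => K u w * (L w v * h v))
      ((volume.restrict (Icc (0:ℝ) 1)).prod (volume.restrict (Icc (0:ℝ) 1))) :=
    ((hK.comp measurable_prodMk_left).comp measurable_fst).aemeasurable.mul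
      (hL.aemeasurable.mul hh.comp_snd)
  calc lkernelApply K (lkernelApply L h) u
      = ∫⁻ w in Icc (0:ℝ) 1, ∫⁻ v in Icc (0:ℝ) 1, K u w * (L w v * h v) := by
        refine lintegral_congr fun w => (lintegral_const_mul'' _ ?_).symm
        exact (hL.comp measurable_prodMk_left).aemeasurable.mul hh
    _ = ∫⁻ v in Icc (0:ℝ) 1, ∫⁻ w in Icc (0:ℝ) 1, K u w * L w v * h v := by
        simp only [mul_assoc]; exact lintegral_lintegral_swap hm
    _ = lkernelApply (lkernelComp K L) h u := lintegral_congr fun v =>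
        lintegral_mul_const'' _
          ((hK.comp measurable_prodMk_left).mul (hL.comp measurable_prodMk_right)).aemeasurable

lemma lintegral_lkernelApply_le (hK : Measurable (uncurry K))
    (hh : AEMeasurable h (volume.restrict (Icc (0:ℝ) 1)))
    (hc : ∀ v ∈ Icc (0:ℝ) 1, ∫⁻ u in Icc (0:ℝ) 1, K u v ≤ c) :
    ∫⁻ u in Icc (0:ℝ) 1, lkernelApply K h u ≤ c * ∫⁻ v in Icc (0:ℝ) 1, h v :=
  calc ∫⁻ u in Icc (0:ℝ) 1, lkernelApply K h u
      = ∫⁻ v in Icc (0:ℝ) 1, ∫⁻ u in Icc (0:ℝ) 1, K u v * h v :=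
        lintegral_lintegral_swap (hK.aemeasurable.mul hh.comp_snd)
    _ = ∫⁻ v in Icc (0:ℝ) 1, (∫⁻ u in Icc (0:ℝ) 1, K u v) * h v :=
        lintegral_congr fun _ =>
          lintegral_mul_const'' _ (hK.comp measurable_prodMk_right).aemeasurable
    _ ≤ ∫⁻ v in Icc (0:ℝ) 1, c * h v :=
        setLIntegral_mono' measurableSet_Icc fun v hv => mul_le_mul_left (hc v hv) _
    _ = c * ∫⁻ v in Icc (0:ℝ) 1, h v := lintegral_const_mul'' c hh

lemma measurable_iterate_lkernelComp (hK : Measurable (uncurry K)) (n : ℕ) :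
    Measurable (uncurry ((lkernelComp K)^[n] K)) := by
  induction n with
  | zero => exact hK
  | succ n ih => rw [Function.iterate_succ_apply']; exact measurable_lkernelComp hK ih

lemma lintegral_iterate_lkernelComp_le (hK : Measurable (uncurry K))
    (hc : ∀ v ∈ Icc (0:ℝ) 1, ∫⁻ u in Icc (0:ℝ) 1, K u v ≤ c) (n : ℕ) :
    ∀ v ∈ Icc (0:ℝ) 1, ∫⁻ u in Icc (0:ℝ) 1, (lkernelComp K)^[n] K u v ≤ c ^ (n + 1) := by
  induction n with
  | zero => simpa using hc
  | succ n ih =>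
    intro v hv
    rw [Function.iterate_succ_apply', pow_succ']
    exact (lintegral_lkernelApply_le hK
      ((measurable_iterate_lkernelComp hK n).comp measurable_prodMk_right).aemeasurable hc).trans
      (mul_le_mul_right (ih v hv) c)

lemma aemeasurable_iterate_lkernelApply (hK : Measurable (uncurry K))
    (hh : AEMeasurable h (volume.restrict (Icc (0:ℝ) 1))) (n : ℕ) :
    AEMeasurable ((lkernelApply K)^[n] h) (volume.restrict (Icc (0:ℝ) 1)) := by
  induction n with
  | zero => exact hh
  | succ n ih =>
    rw [Function.iterate_succ_apply']; exact (measurable_lkernelApply hK ih).aemeasurable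

lemma iterate_lkernelApply_succ (hK : Measurable (uncurry K))
    (hh : AEMeasurable h (volume.restrict (Icc (0:ℝ) 1))) (n : ℕ) :
    (lkernelApply K)^[n + 1] h = lkernelApply ((lkernelComp K)^[n] K) h := by
  induction n with
  | zero => rfl
  | succ n ih =>
    rw [Function.iterate_succ_apply', ih,
      lkernelApply_lkernelApply hK (measurable_iterate_lkernelComp hK n) hh,
      Function.iterate_succ_apply']

lemma iterate_lkernelApply_mono (hle : ∀ v ∈ Icc (0:ℝ) 1, h₁ v ≤ h₂ v) (n : ℕ) :
    ∀ u ∈ Icc (0:ℝ) 1, (lkernelApply K)^[n] h₁ u ≤ (lkernelApply K)^[n] h₂ u := by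
  induction n with
  | zero => exact hle
  | succ n ih =>
    intro u _
    simp only [Function.iterate_succ_apply']
    exact lkernelApply_mono ih u

lemma iterate_lkernelApply_add (hK : Measurable (uncurry K))
    (hh₁ : AEMeasurable h₁ (volume.restrict (Icc (0:ℝ) 1))) (n : ℕ) :
    (lkernelApply K)^[n] (h₁ + h₂) = (lkernelApply K)^[n] h₁ + (lkernelApply K)^[n] h₂ := by
  induction n with
  | zero => rfl
  | succ n ih =>
    simp only [Function.iterate_succ_apply', ih,
      lkernelApply_add hK (aemeasurable_iterate_lkernelApply hK hh₁ n)]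

lemma lintegral_iterate_lkernelApply_le (hK : Measurable (uncurry K))
    (hh : AEMeasurable h (volume.restrict (Icc (0:ℝ) 1)))
    (hc : ∀ v ∈ Icc (0:ℝ) 1, ∫⁻ u in Icc (0:ℝ) 1, K u v ≤ c) (n : ℕ) :
    ∫⁻ u in Icc (0:ℝ) 1, (lkernelApply K)^[n] h u ≤ c ^ n * ∫⁻ v in Icc (0:ℝ) 1, h v := by
  induction n with
  | zero => simp
  | succ n ih =>
    rw [Function.iterate_succ_apply', pow_succ', mul_assoc]
    exact (lintegral_lkernelApply_le hK (aemeasurable_iterate_lkernelApply hK hh n) hc).trans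
      (mul_le_mul_right ih c)

section Renewal

variable {A B : ℝ → ℝ≥0∞}

lemma le_sum_iterate_add_iterate (hK : Measurable (uncurry K))
    (hB : AEMeasurable B (volume.restrict (Icc (0:ℝ) 1)))
    (hAB : ∀ u ∈ Icc (0:ℝ) 1, A u ≤ B u + lkernelApply K A u) (n : ℕ) :
    ∀ u ∈ Icc (0:ℝ) 1,
      A u ≤ (∑ j ∈ Finset.range n, (lkernelApply K)^[j] B u) + (lkernelApply K)^[n] A u := by
  induction n with
  | zero => simp
  | succ n ih =>
    intro u hu
    calc A u ≤ (∑ j ∈ Finset.range n, (lkernelApply K)^[j] B u) + (lkernelApply K)^[n] A u :=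
          ih u hu
      _ ≤ (∑ j ∈ Finset.range n, (lkernelApply K)^[j] B u)
            + (lkernelApply K)^[n] (B + lkernelApply K A) u := by
          gcongr; exact iterate_lkernelApply_mono hAB n u hu
      _ = (∑ j ∈ Finset.range (n + 1), (lkernelApply K)^[j] B u)
            + (lkernelApply K)^[n + 1] A u := by
          rw [iterate_lkernelApply_add hK hB, Pi.add_apply, ← Function.iterate_succ_apply,
            Finset.sum_range_succ, add_assoc]

lemma lintegral_le_of_le_add_lkernelApply {n : ℕ} (hK : Measurable (uncurry K))
    (hK₁ : ∀ v ∈ Icc (0:ℝ) 1, ∫⁻ u in Icc (0:ℝ) 1, K u v ≤ 1)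
    (hKn : ∀ v ∈ Icc (0:ℝ) 1, ∫⁻ u in Icc (0:ℝ) 1, (lkernelComp K)^[n] K u v ≤ c)
    (hA : AEMeasurable A (volume.restrict (Icc (0:ℝ) 1)))
    (hB : AEMeasurable B (volume.restrict (Icc (0:ℝ) 1)))
    (hAB : ∀ u ∈ Icc (0:ℝ) 1, A u ≤ B u + lkernelApply K A u) :
    ∫⁻ u in Icc (0:ℝ) 1, A u
      ≤ (n + 1 : ℕ) * (∫⁻ u in Icc (0:ℝ) 1, B u) + c * ∫⁻ u in Icc (0:ℝ) 1, A u :=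
  calc ∫⁻ u in Icc (0:ℝ) 1, A u
      ≤ ∫⁻ u in Icc (0:ℝ) 1, ((∑ j ∈ Finset.range (n + 1), (lkernelApply K)^[j] B u)
          + (lkernelApply K)^[n + 1] A u) :=
        setLIntegral_mono' measurableSet_Icc (le_sum_iterate_add_iterate hK hB hAB (n + 1))
    _ = (∑ j ∈ Finset.range (n + 1), ∫⁻ u in Icc (0:ℝ) 1, (lkernelApply K)^[j] B u)
          + ∫⁻ u in Icc (0:ℝ) 1, (lkernelApply K)^[n + 1] A u := by
        rw [lintegral_add_left' (Finset.aemeasurable_fun_sum _ fun j _ =>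
            aemeasurable_iterate_lkernelApply hK hB j),
          lintegral_finsetSum' _ fun j _ => aemeasurable_iterate_lkernelApply hK hB j]
    _ ≤ (∑ _j ∈ Finset.range (n + 1), ∫⁻ u in Icc (0:ℝ) 1, B u)
          + c * ∫⁻ u in Icc (0:ℝ) 1, A u := by
        refine add_le_add (Finset.sum_le_sum fun j _ => ?_) ?_
        · simpa using lintegral_iterate_lkernelApply_le hK hB hK₁ j
        · rw [iterate_lkernelApply_succ hK hA]
          exact lintegral_lkernelApply_le (measurable_iterate_lkernelComp hK n) hA hKn
    _ = (n + 1 : ℕ) * (∫⁻ u in Icc (0:ℝ) 1, B u) + c * ∫⁻ u in Icc (0:ℝ) 1, A u := by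
        rw [Finset.sum_const, Finset.card_range, nsmul_eq_mul]

end Renewal

end LKernel

noncomputable def absKernel (F : ℝ → ℝ → ℝ) : ℝ → ℝ → ℝ≥0∞ :=
  fun u v => ENNReal.ofReal |F u v|

section AbsKernel

variable {F : ℝ → ℝ → ℝ} {v : ℝ}

lemma measurable_absKernel (hF : Measurable (uncurry F)) : Measurable (uncurry (absKernel F)) :=
  hF.abs.ennreal_ofReal

lemma lintegral_absKernel_le_kernelOpNorm (hv : v ∈ Icc (0:ℝ) 1) :
    ∫⁻ u in Icc (0:ℝ) 1, absKernel F u v ≤ kernelOpNorm F :=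
  le_biSup (fun v => ∫⁻ u in Icc (0:ℝ) 1, ENNReal.ofReal |F u v|) hv

lemma ae_iterate_lkernelComp_absKernel_ne_top (hF : Measurable (uncurry F))
    (hop : kernelOpNorm F ≠ ⊤) (n : ℕ) (hv : v ∈ Icc (0:ℝ) 1) :
    ∀ᵐ u ∂volume.restrict (Icc (0:ℝ) 1), (lkernelComp (absKernel F))^[n] (absKernel F) u v ≠ ⊤ :=
  (ae_lt_top ((measurable_iterate_lkernelComp (measurable_absKernel hF) n).comp
      measurable_prodMk_right)
    (ne_top_of_le_ne_top (ENNReal.pow_ne_top hop) (lintegral_iterate_lkernelComp_le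
      (measurable_absKernel hF) (fun _ hw => lintegral_absKernel_le_kernelOpNorm hw) n v hv))).mono
    fun _ h => h.ne

/-- The integrand of the Bochner integral defining `F^(n+1)` is nonnegative, so that integral is
the `toReal` of a lintegral; identifying the integrands needs the compositions of `|F|` to be
finite only almost everywhere, which the column bounds provide. -/
lemma kernelIter_eq_toReal (hF : Measurable (uncurry F))
    (hnn : ∀ u ∈ Icc (0:ℝ) 1, ∀ v ∈ Icc (0:ℝ) 1, 0 ≤ F u v) (hop : kernelOpNorm F ≠ ⊤)
    (hv : v ∈ Icc (0:ℝ) 1) (n : ℕ) :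
    ∀ u ∈ Icc (0:ℝ) 1,
      kernelIter F n u v = ((lkernelComp (absKernel F))^[n] (absKernel F) u v).toReal := by
  induction n with
  | zero =>
    intro u hu
    rw [Function.iterate_zero_apply, absKernel, kernelIter, abs_of_nonneg (hnn u hu v hv),
      ENNReal.toReal_ofReal (hnn u hu v hv)]
  | succ n ih =>
    intro u hu
    set L := (lkernelComp (absKernel F))^[n] (absKernel F)
    have hL : Measurable fun w => (L w v).toReal :=
      ((measurable_iterate_lkernelComp (measurable_absKernel hF) n).comp
        measurable_prodMk_right).ennreal_toReal
    calc kernelIter F (n + 1) u v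
        = ∫ w in Icc (0:ℝ) 1, F u w * (L w v).toReal :=
          setIntegral_congr_fun measurableSet_Icc fun w hw => by rw [ih w hw]
      _ = (∫⁻ w in Icc (0:ℝ) 1, ENNReal.ofReal (F u w * (L w v).toReal)).toReal := by
          refine integral_eq_lintegral_of_nonneg_ae ?_
            ((hF.comp measurable_prodMk_left).mul hL).aestronglyMeasurable
          filter_upwards [ae_restrict_mem measurableSet_Icc] with w hw
          exact mul_nonneg (hnn u hu w hw) ENNReal.toReal_nonneg
      _ = ((lkernelComp (absKernel F))^[n + 1] (absKernel F) u v).toReal := by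
          rw [Function.iterate_succ_apply']
          congr 1
          refine lintegral_congr_ae ?_
          filter_upwards [ae_restrict_mem measurableSet_Icc,
            ae_iterate_lkernelComp_absKernel_ne_top hF hop n hv] with w hw hfin
          rw [ENNReal.ofReal_mul (hnn u hu w hw), ENNReal.ofReal_toReal hfin,
            absKernel, abs_of_nonneg (hnn u hu w hw)]

lemma lintegral_iterate_lkernelComp_absKernel_le (hF : Measurable (uncurry F))
    (hnn : ∀ u ∈ Icc (0:ℝ) 1, ∀ v ∈ Icc (0:ℝ) 1, 0 ≤ F u v) (hop : kernelOpNorm F ≠ ⊤)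
    (n : ℕ) (hv : v ∈ Icc (0:ℝ) 1) :
    ∫⁻ u in Icc (0:ℝ) 1, (lkernelComp (absKernel F))^[n] (absKernel F) u v
      ≤ kernelOpNorm (kernelIter F n) := by
  refine le_of_eq_of_le (lintegral_congr_ae ?_) (lintegral_absKernel_le_kernelOpNorm hv)
  filter_upwards [ae_restrict_mem measurableSet_Icc,
    ae_iterate_lkernelComp_absKernel_ne_top hF hop n hv] with u hu hfin
  rw [absKernel, kernelIter_eq_toReal hF hnn hop hv n u hu, abs_of_nonneg ENNReal.toReal_nonneg,
    ENNReal.ofReal_toReal hfin]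

end AbsKernel

lemma ofReal_abs_kernelApply_sub_le_s4 {T s : ℝ} {F Y₁ Y₂ : ℝ → ℝ → ℝ}
    (hF : Measurable (uncurry F)) (hY₁ : MemDT T Y₁) (hY₂ : MemDT T Y₂) (hs : s ∈ Icc (0:ℝ) T)
    (u : ℝ) :
    ENNReal.ofReal |kernelApply F Y₁ u s - kernelApply F Y₂ u s|
      ≤ lkernelApply (absKernel F) (pathSup T fun u t => Y₁ u t - Y₂ u t) u := by
  have hFu : Measurable fun v => F u v := hF.comp measurable_prodMk_left
  have h := enorm_integral_sub_integral_le (μ := volume.restrict (Icc (0:ℝ) 1))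
    (f := fun v => F u v * Y₁ v s) (g := fun v => F u v * Y₂ v s)
    ((hFu.mul (hY₁.meas s hs)).sub (hFu.mul (hY₂.meas s hs))).aestronglyMeasurable
  simp only [Real.enorm_eq_ofReal_abs, ← mul_sub, abs_mul, ENNReal.ofReal_mul (abs_nonneg _)] at h
  exact h.trans (lkernelApply_mono (fun v _ => ofReal_abs_le_pathSup hs) u)

/-- Both `max · 0` and the running supremum are `1`-Lipschitz. -/
lemma ofReal_abs_piMap_sub_le_s4 {X₁ X₂ W₁ W₂ F : ℝ → ℝ → ℝ} {u t : ℝ} {C : ℝ≥0∞} (ht : 0 ≤ t)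
    (hC : ∀ s ∈ Icc (0:ℝ) t, ENNReal.ofReal |X₁ u s - X₂ u s|
      + ENNReal.ofReal |kernelApply F W₁ u s - kernelApply F W₂ u s| ≤ C) :
    ENNReal.ofReal |piMap X₁ F W₁ u t - piMap X₂ F W₂ u t| ≤ C := by
  rcases eq_or_ne C ⊤ with rfl | hC_top
  · exact le_top
  have : Nonempty (Icc (0:ℝ) t) := ⟨⟨0, left_mem_Icc.2 ht⟩⟩
  refine ENNReal.ofReal_le_of_le_toReal (abs_ciSup_sub_ciSup_le fun s => ?_)
  refine (abs_max_sub_max_le_abs _ _ _).trans ?_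
  rw [← ENNReal.ofReal_le_iff_le_toReal hC_top]
  calc ENNReal.ofReal |-X₁ u s + kernelApply F W₁ u s - (-X₂ u s + kernelApply F W₂ u s)|
      ≤ ENNReal.ofReal (|X₁ u s - X₂ u s| + |kernelApply F W₁ u s - kernelApply F W₂ u s|) := by
        refine ENNReal.ofReal_le_ofReal ?_
        rw [show ∀ a b c d : ℝ, -a + b - (-c + d) = -(a - c) + (b - d) by intros; ring,
          ← abs_neg (X₁ u s - X₂ u s)]
        exact abs_add_le _ _
    _ ≤ C := ENNReal.ofReal_add_le.trans (hC s s.2)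

section Lipschitz

variable {T γ : ℝ} {k : ℕ} {F X₁ X₂ Y₁ Y₂ : ℝ → ℝ → ℝ} {u : ℝ}

lemma pathSup_sub_le_of_isRegulator (hF : Measurable (uncurry F))
    (hY₁ : IsRegulator T X₁ F Y₁) (hY₂ : IsRegulator T X₂ F Y₂) (hu : u ∈ Icc (0:ℝ) 1) :
    pathSup T (fun u t => Y₁ u t - Y₂ u t) u
      ≤ pathSup T (fun u t => X₁ u t - X₂ u t) u
        + lkernelApply (absKernel F) (pathSup T fun u t => Y₁ u t - Y₂ u t) u := by
  refine pathSup_le fun t ht => ?_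
  rw [hY₁.2 u hu t ht, hY₂.2 u hu t ht]
  refine ofReal_abs_piMap_sub_le_s4 ht.1 fun s hs => ?_
  have hsT : s ∈ Icc (0:ℝ) T := ⟨hs.1, hs.2.trans ht.2⟩
  exact add_le_add (ofReal_abs_le_pathSup hsT)
    (ofReal_abs_kernelApply_sub_le_s4 hF hY₁.1.memDT hY₂.1.memDT hsT u)

lemma pathSup_reflected_sub_le (hF : Measurable (uncurry F)) (hY₁ : MemDT T Y₁)
    (hY₂ : MemDT T Y₂) :
    pathSup T (fun u t => (X₁ u t + Y₁ u t - kernelApply F Y₁ u t)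
        - (X₂ u t + Y₂ u t - kernelApply F Y₂ u t)) u
      ≤ pathSup T (fun u t => X₁ u t - X₂ u t) u + pathSup T (fun u t => Y₁ u t - Y₂ u t) u
        + lkernelApply (absKernel F) (pathSup T fun u t => Y₁ u t - Y₂ u t) u := by
  refine pathSup_le fun t ht => ?_
  have hsplit : ∀ a₁ b₁ c₁ a₂ b₂ c₂ : ℝ, ENNReal.ofReal |a₁ + b₁ - c₁ - (a₂ + b₂ - c₂)|
      ≤ ENNReal.ofReal |a₁ - a₂| + ENNReal.ofReal |b₁ - b₂| + ENNReal.ofReal |c₁ - c₂| := by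
    intro a₁ b₁ c₁ a₂ b₂ c₂
    rw [← ENNReal.ofReal_add (abs_nonneg _) (abs_nonneg _),
      ← ENNReal.ofReal_add (by positivity) (abs_nonneg _)]
    refine ENNReal.ofReal_le_ofReal ?_
    rw [show a₁ + b₁ - c₁ - (a₂ + b₂ - c₂) = a₁ - a₂ + (b₁ - b₂) - (c₁ - c₂) by ring]
    exact (abs_sub _ _).trans (add_le_add_left (abs_add_le _ _) _)
  exact (hsplit _ _ _ _ _ _).trans <| add_le_add
    (add_le_add (ofReal_abs_le_pathSup ht) (ofReal_abs_le_pathSup ht))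
    (ofReal_abs_kernelApply_sub_le_s4 hF hY₁ hY₂ ht u)

lemma tNorm_regulator_sub_le (hF : IsReflKernel F γ k) (hX₁ : MemDT T X₁) (hX₂ : MemDT T X₂)
    (hY₁ : IsRegulator T X₁ F Y₁) (hY₂ : IsRegulator T X₂ F Y₂) :
    TNorm T (fun u t => Y₁ u t - Y₂ u t)
      ≤ ENNReal.ofReal k * TNorm T (fun u t => X₁ u t - X₂ u t)
        + ENNReal.ofReal γ * TNorm T (fun u t => Y₁ u t - Y₂ u t) := by
  have hKk : ∀ v ∈ Icc (0:ℝ) 1, ∫⁻ u in Icc (0:ℝ) 1,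
      (lkernelComp (absKernel F))^[k - 1] (absKernel F) u v ≤ ENNReal.ofReal γ := fun v hv =>
    (lintegral_iterate_lkernelComp_absKernel_le hF.meas hF.nonneg
      (ne_top_of_le_ne_top ENNReal.one_ne_top hF.opNorm_le_one) (k - 1) hv).trans hF.iter_le
  have h := lintegral_le_of_le_add_lkernelApply (measurable_absKernel hF.meas)
    (fun v hv => (lintegral_absKernel_le_kernelOpNorm hv).trans hF.opNorm_le_one) hKk
    (hY₁.1.memDT.sub hY₂.1.memDT).aemeasurable_pathSup (hX₁.sub hX₂).aemeasurable_pathSup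
    fun u hu => pathSup_sub_le_of_isRegulator hF.meas hY₁ hY₂ hu
  rwa [Nat.sub_add_cancel hF.k_pos, ← ENNReal.ofReal_natCast] at h

lemma tNorm_reflected_sub_le (hF : Measurable (uncurry F)) (hop : kernelOpNorm F ≤ 1)
    (hX₁ : MemDT T X₁) (hX₂ : MemDT T X₂) (hY₁ : MemDT T Y₁) (hY₂ : MemDT T Y₂) :
    TNorm T (fun u t => (X₁ u t + Y₁ u t - kernelApply F Y₁ u t)
        - (X₂ u t + Y₂ u t - kernelApply F Y₂ u t))
      ≤ TNorm T (fun u t => X₁ u t - X₂ u t) + TNorm T (fun u t => Y₁ u t - Y₂ u t)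
        + TNorm T (fun u t => Y₁ u t - Y₂ u t) := by
  have hΔX := (hX₁.sub hX₂).aemeasurable_pathSup
  have hΔY := (hY₁.sub hY₂).aemeasurable_pathSup
  calc _ ≤ ∫⁻ u in Icc (0:ℝ) 1, (pathSup T (fun u t => X₁ u t - X₂ u t) u
          + pathSup T (fun u t => Y₁ u t - Y₂ u t) u
          + lkernelApply (absKernel F) (pathSup T fun u t => Y₁ u t - Y₂ u t) u) :=
        lintegral_mono fun _ => pathSup_reflected_sub_le hF hY₁ hY₂
    _ = TNorm T (fun u t => X₁ u t - X₂ u t) + TNorm T (fun u t => Y₁ u t - Y₂ u t)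
          + ∫⁻ u in Icc (0:ℝ) 1,
            lkernelApply (absKernel F) (pathSup T fun u t => Y₁ u t - Y₂ u t) u := by
        rw [lintegral_add_left' (f := fun u => pathSup T (fun u t => X₁ u t - X₂ u t) u
            + pathSup T (fun u t => Y₁ u t - Y₂ u t) u) (hΔX.add hΔY), lintegral_add_left' hΔX]
        rfl
    _ ≤ _ := by
        gcongr
        exact (lintegral_lkernelApply_le (measurable_absKernel hF) hΔY
          fun v hv => (lintegral_absKernel_le_kernelOpNorm hv).trans hop).trans_eq (one_mul _)

end Lipschitz

theorem reflection_map_lipschitz_general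
    (T : ℝ) (F : ℝ → ℝ → ℝ) (γ : ℝ) (k : ℕ) (hF : IsReflKernel F γ k)
    (X1 X2 Y1 Y2 : ℝ → ℝ → ℝ) (hX1 : MemDT T X1) (hX2 : MemDT T X2)
    (hY1 : IsRegulator T X1 F Y1) (hY2 : IsRegulator T X2 F Y2) :
    TNorm T (fun u t => Y1 u t - Y2 u t)
      ≤ ENNReal.ofReal ((k : ℝ) / (1 - γ)) * TNorm T (fun u t => X1 u t - X2 u t) ∧
    TNorm T (fun u t => (X1 u t + Y1 u t - kernelApply F Y1 u t)
        - (X2 u t + Y2 u t - kernelApply F Y2 u t))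
      ≤ ENNReal.ofReal (1 + 2 * (k : ℝ) / (1 - γ))
          * TNorm T (fun u t => X1 u t - X2 u t) := by
  have hΨ : TNorm T (fun u t => Y1 u t - Y2 u t)
      ≤ ENNReal.ofReal ((k : ℝ) / (1 - γ)) * TNorm T (fun u t => X1 u t - X2 u t) :=
    le_ofReal_div_mul_of_le_add (hY1.1.memDT.sub hY2.1.memDT).finite hF.gamma_mem.1.le
      hF.gamma_mem.2 (tNorm_regulator_sub_le hF hX1 hX2 hY1 hY2)
  refine ⟨hΨ, (tNorm_reflected_sub_le hF.meas hF.opNorm_le_one hX1 hX2 hY1.1.memDT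
    hY2.1.memDT).trans ?_⟩
  have hc : 0 ≤ (k : ℝ) / (1 - γ) := div_nonneg k.cast_nonneg (sub_nonneg.2 hF.gamma_mem.2.le)
  rw [show 1 + 2 * (k : ℝ) / (1 - γ) = 1 + k / (1 - γ) + k / (1 - γ) by ring,
    ENNReal.ofReal_add (by positivity) hc, ENNReal.ofReal_add zero_le_one hc,
    ENNReal.ofReal_one, add_mul, add_mul, one_mul]
  gcongr

/-- Lipschitz continuity of the regulator `Ψ_F` and the reflected process
`Φ_F` in the free process. -/
theorem reflection_map_lipschitz
    (T : ℝ) (hT : 0 < T) (F : ℝ → ℝ → ℝ) (γ : ℝ) (k : ℕ) (hF : IsReflKernel F γ k)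
    (X1 X2 Y1 Y2 : ℝ → ℝ → ℝ) (hX1 : MemDT T X1) (hX2 : MemDT T X2)
    (hY1 : IsRegulator T X1 F Y1) (hY2 : IsRegulator T X2 F Y2) :
    TNorm T (fun u t => Y1 u t - Y2 u t)
      ≤ ENNReal.ofReal ((k : ℝ) / (1 - γ)) * TNorm T (fun u t => X1 u t - X2 u t) ∧
    TNorm T (fun u t => (X1 u t + Y1 u t - kernelApply F Y1 u t)
        - (X2 u t + Y2 u t - kernelApply F Y2 u t))
      ≤ ENNReal.ofReal (1 + 2 * (k : ℝ) / (1 - γ))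
          * TNorm T (fun u t => X1 u t - X2 u t) :=
  reflection_map_lipschitz_general T F γ k hF X1 X2 Y1 Y2 hX1 hX2 hY1 hY2
end
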